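/- arXiv:2011.08620 — 7 statements merged into one kernel-verified Lean document; each statement's English description precedes it below -/
import Mathlib

section
/- Assume ψ_{pw}(i,j) > 0 for all i ∈ {1,…,n} and j ∈ {1,…,m}. Then the kernel of M is exactly the two-dimensional space spanned by u_1 = (e_n, 0) and u_2 = (0, e_m), where e_n ∈ ℝ^n and e_m ∈ ℝ^m are the all-ones vectors: M u = 0 if and only if u = (α e_n, β e_m) for some scalars α, β. In particular M has rank n + m − 2. -/
/-!
Let `X = (1[P = pᵢ])ᵢ ⊕ (1[W = wⱼ])ⱼ` be the one-hot encoding of (price, weather index). `M` is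
the covariance matrix of `X`: `M = ∑ᵢⱼ ψ_{pw}(i,j) dᵢⱼ dᵢⱼᵀ` with `dᵢⱼ = X(i,j) - E X`. Hence
`uᵀ M u = ∑ᵢⱼ ψ_{pw}(i,j) (dᵢⱼ ⬝ u)²`, and since all weights are positive, `M u = 0` iff
`dᵢⱼ ⬝ u = uᵢ + u_{n+j} - E (X ⬝ u)` vanishes for all `i, j`, i.e. iff both blocks of `u` are
constant. The rank then follows from rank–nullity.
-/

open Finset Matrix

section WeightedGram

variable {ι κ R : Type*} [Fintype κ] [CommRing R]

theorem sum_smul_vecMulVec_sub_mean {π : κ → R} (hπ : ∑ k, π k = 1) (x : κ → ι → R) :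
    ∑ k, π k • vecMulVec (x k - ∑ k', π k' • x k') (x k - ∑ k', π k' • x k') =
      ∑ k, π k • vecMulVec (x k) (x k) - vecMulVec (∑ k, π k • x k) (∑ k, π k • x k) := by
  ext a b
  simp only [Matrix.sum_apply, Matrix.sub_apply, Matrix.smul_apply, vecMulVec_apply,
    Pi.sub_apply, Finset.sum_apply, Pi.smul_apply, smul_eq_mul]
  set μa := ∑ k, π k * x k a
  set μb := ∑ k, π k * x k b
  have expand : ∀ k, π k * ((x k a - μa) * (x k b - μb)) =
      π k * (x k a * x k b) - μb * (π k * x k a) - μa * (π k * x k b) + μa * μb * π k :=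
    fun k => by ring
  simp only [expand, sum_add_distrib, sum_sub_distrib, ← mul_sum, hπ]
  ring

theorem dotProduct_sum_smul_vecMulVec_self_mulVec [Fintype ι] (c : κ → R) (v : κ → ι → R)
    (u : ι → R) :
    u ⬝ᵥ (∑ k, c k • vecMulVec (v k) (v k)) *ᵥ u = ∑ k, c k * (v k ⬝ᵥ u) ^ 2 := by
  simp only [sum_mulVec, smul_mulVec, vecMulVec_mulVec, dotProduct_sum, dotProduct_smul]
  refine sum_congr rfl fun k _ => ?_
  simp only [dotProduct_comm u (v k), MulOpposite.smul_eq_mul_unop, MulOpposite.unop_op,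
    smul_eq_mul]
  ring

theorem sum_smul_vecMulVec_self_mulVec_eq_zero_iff [Fintype ι] [LinearOrder R]
    [IsStrictOrderedRing R] {c : κ → R} (hc : ∀ k, 0 < c k) (v : κ → ι → R) (u : ι → R) :
    (∑ k, c k • vecMulVec (v k) (v k)) *ᵥ u = 0 ↔ ∀ k, v k ⬝ᵥ u = 0 := by
  constructor
  · intro h k
    have hq := dotProduct_sum_smul_vecMulVec_self_mulVec c v u
    rw [h, dotProduct_zero, eq_comm, Finset.sum_eq_zero_iff_of_nonneg
      fun k _ => mul_nonneg (hc k).le (sq_nonneg _)] at hq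
    simpa [(hc k).ne'] using hq k (mem_univ k)
  · intro h
    simp [sum_mulVec, smul_mulVec, vecMulVec_mulVec, h]

end WeightedGram

section SumElimConst

variable {ι₁ ι₂ R : Type*}

def sumElimConst [Semiring R] : R × R →ₗ[R] (ι₁ ⊕ ι₂ → R) where
  toFun c := Sum.elim (fun _ => c.1) (fun _ => c.2)
  map_add' _ _ := by ext (_ | _) <;> rfl
  map_smul' _ _ := by ext (_ | _) <;> rfl

theorem sumElimConst_injective [Semiring R] [Nonempty ι₁] [Nonempty ι₂] :
    Function.Injective (sumElimConst : R × R →ₗ[R] (ι₁ ⊕ ι₂ → R)) := by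
  intro c d h
  obtain ⟨i⟩ := ‹Nonempty ι₁›
  obtain ⟨j⟩ := ‹Nonempty ι₂›
  exact Prod.ext (congrFun h (.inl i)) (congrFun h (.inr j))

theorem exists_eq_sumElim_const_of_forall_add_eq [AddCommGroup R] [Nonempty ι₁] [Nonempty ι₂]
    {u : ι₁ ⊕ ι₂ → R} {c : R} (h : ∀ i j, u (.inl i) + u (.inr j) = c) :
    ∃ α β : R, u = Sum.elim (fun _ => α) (fun _ => β) := by
  obtain ⟨i₀⟩ := ‹Nonempty ι₁›
  obtain ⟨j₀⟩ := ‹Nonempty ι₂›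
  refine ⟨c - u (.inr j₀), c - u (.inl i₀), funext ?_⟩
  rintro (i | j)
  · exact eq_sub_of_add_eq (h i j₀)
  · exact eq_sub_of_add_eq' (h i₀ j)

theorem rank_add_two_of_mulVec_eq_zero_iff [Fintype ι₁] [Fintype ι₂] [Nonempty ι₁] [Nonempty ι₂]
    [Field R] (A : Matrix (ι₁ ⊕ ι₂) (ι₁ ⊕ ι₂) R)
    (hA : ∀ u, A *ᵥ u = 0 ↔ ∃ α β : R, u = Sum.elim (fun _ => α) (fun _ => β)) :
    A.rank + 2 = Fintype.card ι₁ + Fintype.card ι₂ := by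
  have hker : LinearMap.ker A.mulVecLin = LinearMap.range sumElimConst := by
    ext u
    simp only [LinearMap.mem_ker, mulVecLin_apply, hA, LinearMap.mem_range, Prod.exists]
    exact exists₂_congr fun α β => eq_comm
  have := LinearMap.finrank_range_add_finrank_ker A.mulVecLin
  rw [hker, LinearMap.finrank_range_of_inj sumElimConst_injective] at this
  simpa [Matrix.rank] using this

end SumElimConst

section JointCovariance

variable {ι₁ ι₂ R : Type*} [Fintype ι₁] [Fintype ι₂] [CommRing R]

def marginals (P : Matrix ι₁ ι₂ R) : ι₁ ⊕ ι₂ → R :=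
  Sum.elim (fun i => ∑ j, P i j) (fun j => ∑ i, P i j)

theorem marginals_dotProduct_sumElim {P : Matrix ι₁ ι₂ R} (hP : ∑ i, ∑ j, P i j = 1) (α β : R) :
    marginals P ⬝ᵥ Sum.elim (fun _ => α) (fun _ => β) = α + β := by
  simp only [marginals, dotProduct, Fintype.sum_sum_type, Sum.elim_inl, Sum.elim_inr, ← sum_mul,
    hP, sum_comm (γ := ι₂), one_mul]

variable [DecidableEq ι₁] [DecidableEq ι₂]

def oneHotPair (i : ι₁) (j : ι₂) : ι₁ ⊕ ι₂ → R := Sum.elim (Pi.single i 1) (Pi.single j 1)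

theorem oneHotPair_dotProduct (i : ι₁) (j : ι₂) (u : ι₁ ⊕ ι₂ → R) :
    oneHotPair i j ⬝ᵥ u = u (.inl i) + u (.inr j) := by
  simp [oneHotPair, dotProduct, Fintype.sum_sum_type, Pi.single_apply]

/-- The covariance matrix of `oneHotPair i j` when `(i, j)` has joint distribution `P`. -/
def jointCov (P : Matrix ι₁ ι₂ R) : Matrix (ι₁ ⊕ ι₂) (ι₁ ⊕ ι₂) R :=
  fromBlocks (diagonal fun i => ∑ j, P i j) P Pᵀ (diagonal fun j => ∑ i, P i j) -
    vecMulVec (marginals P) (marginals P)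

theorem sum_smul_oneHotPair (P : Matrix ι₁ ι₂ R) :
    ∑ k : ι₁ × ι₂, P k.1 k.2 • oneHotPair k.1 k.2 = marginals P := by
  ext (i | j) <;> simp [oneHotPair, marginals, Fintype.sum_prod_type, Pi.single_apply]

theorem sum_smul_vecMulVec_oneHotPair (P : Matrix ι₁ ι₂ R) :
    ∑ k : ι₁ × ι₂, P k.1 k.2 • vecMulVec (oneHotPair k.1 k.2) (oneHotPair k.1 k.2) =
      fromBlocks (diagonal fun i => ∑ j, P i j) P Pᵀ (diagonal fun j => ∑ i, P i j) := by
  ext (i | j) (i' | j') <;>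
    simp +contextual [Matrix.sum_apply, oneHotPair, Fintype.sum_prod_type, Pi.single_apply,
      vecMulVec_apply, diagonal_apply]

theorem jointCov_eq_sum_smul_vecMulVec {P : Matrix ι₁ ι₂ R} (hP : ∑ i, ∑ j, P i j = 1) :
    jointCov P = ∑ k : ι₁ × ι₂, P k.1 k.2 •
      vecMulVec (oneHotPair k.1 k.2 - marginals P) (oneHotPair k.1 k.2 - marginals P) := by
  rw [← sum_smul_oneHotPair, sum_smul_vecMulVec_sub_mean (by rwa [Fintype.sum_prod_type]),
    sum_smul_vecMulVec_oneHotPair, jointCov, sum_smul_oneHotPair]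

theorem jointCov_mulVec_eq_zero_iff [LinearOrder R] [IsStrictOrderedRing R] [Nonempty ι₁]
    [Nonempty ι₂] {P : Matrix ι₁ ι₂ R} (hpos : ∀ i j, 0 < P i j) (hP : ∑ i, ∑ j, P i j = 1)
    (u : ι₁ ⊕ ι₂ → R) :
    jointCov P *ᵥ u = 0 ↔ ∃ α β : R, u = Sum.elim (fun _ => α) (fun _ => β) := by
  rw [jointCov_eq_sum_smul_vecMulVec hP,
    sum_smul_vecMulVec_self_mulVec_eq_zero_iff (c := fun k : ι₁ × ι₂ => P k.1 k.2)
      (fun k => hpos k.1 k.2)]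
  simp only [sub_dotProduct, oneHotPair_dotProduct, Prod.forall, sub_eq_zero]
  constructor
  · exact exists_eq_sumElim_const_of_forall_add_eq
  · rintro ⟨α, β, rfl⟩ i j
    simp [marginals_dotProduct_sumElim hP]

end JointCovariance

theorem stmt_7_general (n m l : ℕ)
    (ψ : Fin (n+1) → Fin l → Fin (m+1) → ℝ)
    (hψ1 : ∑ i, ∑ k, ∑ j, ψ i k j = 1)
    (ψp : Fin (n+1) → ℝ) (hψp : ∀ i, ψp i = ∑ k, ∑ j, ψ i k j)
    (ψw : Fin (m+1) → ℝ) (hψw : ∀ j, ψw j = ∑ i, ∑ k, ψ i k j)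
    (ψpw : Matrix (Fin (n+1)) (Fin (m+1)) ℝ) (hψpw : ∀ i j, ψpw i j = ∑ k, ψ i k j)
    (M : Matrix (Fin (n+1) ⊕ Fin (m+1)) (Fin (n+1) ⊕ Fin (m+1)) ℝ)
    (hMpp : ∀ i i', M (Sum.inl i) (Sum.inl i') = (if i = i' then ψp i else 0) - ψp i * ψp i')
    (hMww : ∀ j j', M (Sum.inr j) (Sum.inr j') = (if j = j' then ψw j else 0) - ψw j * ψw j')
    (hMpw : ∀ i j, M (Sum.inl i) (Sum.inr j) = ψpw i j - ψp i * ψw j)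
    (hMwp : ∀ i j, M (Sum.inr j) (Sum.inl i) = ψpw i j - ψp i * ψw j)
    (hpos : ∀ i j, 0 < ψpw i j) :
    (∀ u : Fin (n+1) ⊕ Fin (m+1) → ℝ,
      M.mulVec u = 0 ↔
        ∃ α β : ℝ, u = Sum.elim (fun _ => α) (fun _ => β)) ∧
    M.rank = n + m := by
  have hrow : ∀ i, ∑ j, ψpw i j = ψp i := fun i => by
    simp only [hψp, hψpw]; exact sum_comm
  have hcol : ∀ j, ∑ i, ψpw i j = ψw j := fun j => by simp only [hψw, hψpw]
  have htotal : ∑ i, ∑ j, ψpw i j = 1 := by simpa only [hrow, hψp] using hψ1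
  have hM : M = jointCov ψpw := by
    ext (i | j) (i' | j') <;>
      simp [jointCov, marginals, vecMulVec_apply, diagonal_apply, hrow, hcol, hMpp, hMww, hMpw,
        hMwp, mul_comm]
  have hker := hM ▸ jointCov_mulVec_eq_zero_iff hpos htotal
  refine ⟨hker, ?_⟩
  have := rank_add_two_of_mulVec_eq_zero_iff M hker
  simp only [Fintype.card_fin] at this
  omega

theorem stmt_7 (n m l : ℕ) (hl : 1 ≤ l)
    (p : Fin (n+1) → ℝ) (q : Fin l → ℝ) (w : Fin (m+1) → ℝ)
    (ψ : Fin (n+1) → Fin l → Fin (m+1) → ℝ)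
    (hψ0 : ∀ i k j, 0 ≤ ψ i k j)
    (hψ1 : ∑ i, ∑ k, ∑ j, ψ i k j = 1)
    (ψp : Fin (n+1) → ℝ) (hψp : ∀ i, ψp i = ∑ k, ∑ j, ψ i k j)
    (ψw : Fin (m+1) → ℝ) (hψw : ∀ j, ψw j = ∑ i, ∑ k, ψ i k j)
    (ψpw : Matrix (Fin (n+1)) (Fin (m+1)) ℝ) (hψpw : ∀ i j, ψpw i j = ∑ k, ψ i k j)
    (M : Matrix (Fin (n+1) ⊕ Fin (m+1)) (Fin (n+1) ⊕ Fin (m+1)) ℝ)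
    (hMpp : ∀ i i', M (Sum.inl i) (Sum.inl i') = (if i = i' then ψp i else 0) - ψp i * ψp i')
    (hMww : ∀ j j', M (Sum.inr j) (Sum.inr j') = (if j = j' then ψw j else 0) - ψw j * ψw j')
    (hMpw : ∀ i j, M (Sum.inl i) (Sum.inr j) = ψpw i j - ψp i * ψw j)
    (hMwp : ∀ i j, M (Sum.inr j) (Sum.inl i) = ψpw i j - ψp i * ψw j)
    (hpos : ∀ i j, 0 < ψpw i j) :
    (∀ u : Fin (n+1) ⊕ Fin (m+1) → ℝ,
      M.mulVec u = 0 ↔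
        ∃ α β : ℝ, u = Sum.elim (fun _ => α) (fun _ => β)) ∧
    M.rank = n + m :=
  stmt_7_general n m l ψ hψ1 ψp hψp ψw hψw ψpw hψpw M hMpp hMww hMpw hMwp hpos
end

section
/- Assume ψ_{pw}(i,j) > 0 for all i, j. Let M̂ be the (n+m−2)×(n+m) matrix obtained from M by deleting its n-th row (the last p-row) and its (n+m)-th row (the last w-row). Then M̂ has full row rank n + m − 2, and moreover the two deleted rows are linear combinations of the remaining rows, so M̂ has the same row space as M. -/
/-!
`M` is the covariance matrix of the indicator vector `X_ab = (e_a, e_b)` of a pair `(a, b)` drawn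
with law `ψpw`, i.e. the Gram matrix `∑ ψpw a b • (X_ab - μ)(X_ab - μ)ᵀ`. Hence `x ᵥ* M = 0` forces
`x ⬝ᵥ (X_ab - μ) = 0` wherever `ψpw a b ≠ 0`, that is, `x (inl a) + x (inr b)` is constant. A
relation among the kept rows extends by zero at the two deleted indices to such an `x`; evaluating
at the two deleted indices makes the constant, and then every coefficient, vanish. Conversely the
indicator of either block lies in the left kernel, so the rows of each block sum to zero and the
deleted rows are minus the sums of the kept rows of their block.
-/

open Finset Matrix

section Variance

variable {κ ι : Type*} [Fintype κ]

theorem sum_smul_vecMulVec_sub_mean_s8 (r : κ → ℝ) (Y : κ → ι → ℝ) (μ : ι → ℝ)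
    (hr : ∑ k, r k = 1) (hμ : ∑ k, r k • Y k = μ) :
    ∑ k, r k • vecMulVec (Y k - μ) (Y k - μ) =
      ∑ k, r k • vecMulVec (Y k) (Y k) - vecMulVec μ μ := by
  have hμ' : ∀ i, ∑ k, r k * Y k i = μ i := fun i => by simpa using congrFun hμ i
  ext i j
  simp only [Matrix.sum_apply, Matrix.smul_apply, Matrix.sub_apply, vecMulVec_apply, Pi.sub_apply,
    smul_eq_mul]
  calc ∑ k, r k * ((Y k i - μ i) * (Y k j - μ j))
      = ∑ k, r k * (Y k i * Y k j) - μ i * ∑ k, r k * Y k j - μ j * ∑ k, r k * Y k i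
          + μ i * μ j * ∑ k, r k := by
        simp only [Finset.mul_sum, ← Finset.sum_sub_distrib, ← Finset.sum_add_distrib]
        exact Finset.sum_congr rfl fun k _ => by ring
    _ = _ := by rw [hμ', hμ', hr]; ring

variable [Fintype ι] (r : κ → ℝ) (Y : κ → ι → ℝ) (x : ι → ℝ)

theorem vecMul_sum_smul_vecMulVec_self :
    x ᵥ* (∑ k, r k • vecMulVec (Y k) (Y k)) = ∑ k, (r k * x ⬝ᵥ Y k) • Y k := by
  simp only [Matrix.vecMul_sum, Matrix.vecMul_smul, vecMul_vecMulVec, smul_smul]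

theorem vecMul_sum_smul_vecMulVec_self_eq_zero_iff (hr : ∀ k, 0 ≤ r k) :
    x ᵥ* (∑ k, r k • vecMulVec (Y k) (Y k)) = 0 ↔ ∀ k, r k ≠ 0 → x ⬝ᵥ Y k = 0 := by
  rw [vecMul_sum_smul_vecMulVec_self]
  constructor
  · intro h k hk
    have hquad : ∑ k, r k * (x ⬝ᵥ Y k) ^ 2 = 0 := by
      simpa [dotProduct_sum, dotProduct_smul, sq, mul_assoc, mul_comm, mul_left_comm] using
        congrArg (x ⬝ᵥ ·) h
    have := (Finset.sum_eq_zero_iff_of_nonneg fun k _ => mul_nonneg (hr k) (sq_nonneg _)).1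
      hquad k (mem_univ k)
    simpa [hk] using this
  · intro h
    refine Finset.sum_eq_zero fun k _ => ?_
    by_cases hk : r k = 0 <;> simp [hk, h]

end Variance

section PairCov

variable {A B : Type*} [Fintype A] [Fintype B] [DecidableEq A] [DecidableEq B]

def pairIndicator (a : A) (b : B) : A ⊕ B → ℝ := Sum.elim (Pi.single a 1) (Pi.single b 1)

def pairMean (r : Matrix A B ℝ) : A ⊕ B → ℝ := Sum.elim (r *ᵥ 1) (1 ᵥ* r)

/-- The covariance matrix of `pairIndicator a b` when `(a, b)` is drawn with law `r`. -/
def pairCov (r : Matrix A B ℝ) : Matrix (A ⊕ B) (A ⊕ B) ℝ :=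
  ∑ p : A × B, r p.1 p.2 •
    vecMulVec (pairIndicator p.1 p.2 - pairMean r) (pairIndicator p.1 p.2 - pairMean r)

theorem dotProduct_pairIndicator (x : A ⊕ B → ℝ) (a : A) (b : B) :
    x ⬝ᵥ pairIndicator a b = x (.inl a) + x (.inr b) := by
  simp [pairIndicator, dotProduct, Fintype.sum_sum_type, Pi.single_apply]

theorem sum_smul_pairIndicator (r : Matrix A B ℝ) :
    ∑ p : A × B, r p.1 p.2 • pairIndicator p.1 p.2 = pairMean r := by
  ext (i | j) <;>
    simp [pairIndicator, pairMean, Pi.single_apply, Fintype.sum_prod_type, mulVec, vecMul,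
      dotProduct]

theorem pairCov_eq_fromBlocks (r : Matrix A B ℝ) (hr : ∑ a, ∑ b, r a b = 1) :
    pairCov r = fromBlocks
      (diagonal (r *ᵥ 1) - vecMulVec (r *ᵥ 1) (r *ᵥ 1)) (r - vecMulVec (r *ᵥ 1) (1 ᵥ* r))
      (rᵀ - vecMulVec (1 ᵥ* r) (r *ᵥ 1)) (diagonal (1 ᵥ* r) - vecMulVec (1 ᵥ* r) (1 ᵥ* r)) := by
  rw [pairCov, sum_smul_vecMulVec_sub_mean_s8 _ _ _ (by rwa [Fintype.sum_prod_type])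
    (sum_smul_pairIndicator r)]
  ext (i | j) (i' | j') <;>
    simp [pairIndicator, pairMean, Pi.single_apply, Fintype.sum_prod_type, mulVec, vecMul,
      dotProduct, Matrix.sum_apply, vecMulVec_apply, diagonal_apply] <;>
    split_ifs with h <;> simp [h]

theorem vecMul_pairCov_eq_zero_iff (r : Matrix A B ℝ) (hr : ∀ a b, 0 ≤ r a b) (x : A ⊕ B → ℝ) :
    x ᵥ* pairCov r = 0 ↔ ∀ a b, r a b ≠ 0 → x (.inl a) + x (.inr b) = x ⬝ᵥ pairMean r := by
  rw [pairCov, vecMul_sum_smul_vecMulVec_self_eq_zero_iff (fun p : A × B => r p.1 p.2) _ _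
    fun p => hr p.1 p.2]
  simp [dotProduct_sub, dotProduct_pairIndicator, sub_eq_zero]

theorem sum_pairCov_inl (r : Matrix A B ℝ) (hr : ∑ a, ∑ b, r a b = 1) :
    ∑ a, pairCov r (.inl a) = 0 := by
  have hmean : Sum.elim 1 0 ⬝ᵥ pairMean r = 1 := by
    simpa [pairMean, dotProduct, mulVec, Fintype.sum_sum_type] using hr
  have := vecMul_sum_smul_vecMulVec_self (fun p : A × B => r p.1 p.2)
    (fun p => pairIndicator p.1 p.2 - pairMean r) (Sum.elim 1 0)
  unfold pairCov
  simpa [vecMul_eq_sum, Fintype.sum_sum_type, dotProduct_sub, dotProduct_pairIndicator,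
    hmean] using this

theorem sum_pairCov_inr (r : Matrix A B ℝ) (hr : ∑ a, ∑ b, r a b = 1) :
    ∑ b, pairCov r (.inr b) = 0 := by
  have hmean : Sum.elim 0 1 ⬝ᵥ pairMean r = 1 := by
    simpa [pairMean, dotProduct, vecMul, Fintype.sum_sum_type, Finset.sum_comm (γ := B)] using hr
  have := vecMul_sum_smul_vecMulVec_self (fun p : A × B => r p.1 p.2)
    (fun p => pairIndicator p.1 p.2 - pairMean r) (Sum.elim 0 1)
  unfold pairCov
  simpa [vecMul_eq_sum, Fintype.sum_sum_type, dotProduct_sub, dotProduct_pairIndicator,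
    hmean] using this

end PairCov

section DropLastRows

open Submodule

theorem last_mem_span_range_castSucc {R V : Type*} [Ring R] [AddCommGroup V] [Module R V] {n : ℕ}
    (v : Fin (n + 1) → V) (hv : ∑ i, v i = 0) :
    v (Fin.last n) ∈ span R (Set.range fun i : Fin n => v i.castSucc) := by
  rw [Fin.sum_univ_castSucc, add_eq_zero_iff_eq_neg'] at hv
  rw [hv]
  exact neg_mem (sum_mem fun i _ => subset_span ⟨i, rfl⟩)

variable {R ι : Type*} [Ring R] {n m : ℕ} (M : Matrix (Fin (n + 1) ⊕ Fin (m + 1)) ι R)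

theorem linearIndependent_submatrix_castSucc
    (hker : ∀ x, x ᵥ* M = 0 → ∃ c, ∀ a b, x (.inl a) + x (.inr b) = c) :
    LinearIndependent R (M.submatrix (Sum.map Fin.castSucc Fin.castSucc) id) := by
  refine Fintype.linearIndependent_iff.2 fun g hg => ?_
  set x : Fin (n + 1) ⊕ Fin (m + 1) → R :=
    Sum.elim (Fin.snoc (fun i => g (.inl i)) 0) (Fin.snoc (fun j => g (.inr j)) 0)
  have hx : x ᵥ* M = 0 := by
    rw [← hg]
    simp only [vecMul_eq_sum, Fintype.sum_sum_type, Sum.elim_inl, Sum.elim_inr,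
      Fin.sum_univ_castSucc, Fin.snoc_castSucc, Fin.snoc_last, zero_smul, add_zero, x]
    rfl
  obtain ⟨c, hc⟩ := hker x hx
  have hc0 : c = 0 := by simpa [x] using (hc (Fin.last n) (Fin.last m)).symm
  rintro (i | j)
  · simpa [x, hc0] using hc i.castSucc (Fin.last m)
  · simpa [x, hc0] using hc (Fin.last n) j.castSucc

theorem inl_last_mem_span_range_submatrix_castSucc (h : ∑ a, M (.inl a) = 0) :
    M (.inl (Fin.last n)) ∈
      span R (Set.range (M.submatrix (Sum.map Fin.castSucc Fin.castSucc) id)) :=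
  span_mono (by rintro _ ⟨i, rfl⟩; exact ⟨.inl i, rfl⟩)
    (last_mem_span_range_castSucc (fun a => M (.inl a)) h)

theorem inr_last_mem_span_range_submatrix_castSucc (h : ∑ b, M (.inr b) = 0) :
    M (.inr (Fin.last m)) ∈
      span R (Set.range (M.submatrix (Sum.map Fin.castSucc Fin.castSucc) id)) :=
  span_mono (by rintro _ ⟨j, rfl⟩; exact ⟨.inr j, rfl⟩)
    (last_mem_span_range_castSucc (fun b => M (.inr b)) h)

theorem span_range_submatrix_castSucc (hinl : ∑ a, M (.inl a) = 0) (hinr : ∑ b, M (.inr b) = 0) :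
    span R (Set.range (M.submatrix (Sum.map Fin.castSucc Fin.castSucc) id)) =
      span R (Set.range M) := by
  refine le_antisymm (span_mono fun _ ⟨s, hs⟩ => ⟨_, hs⟩) (span_le.2 ?_)
  rintro _ ⟨(i | j), rfl⟩
  · induction i using Fin.lastCases with
    | last => exact inl_last_mem_span_range_submatrix_castSucc M hinl
    | cast i => exact subset_span ⟨.inl i, rfl⟩
  · induction j using Fin.lastCases with
    | last => exact inr_last_mem_span_range_submatrix_castSucc M hinr
    | cast j => exact subset_span ⟨.inr j, rfl⟩

end DropLastRows

theorem stmt_8_general (n m l : ℕ)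
    (ψ : Fin (n+1) → Fin l → Fin (m+1) → ℝ)
    (hψ1 : ∑ i, ∑ k, ∑ j, ψ i k j = 1)
    (ψp : Fin (n+1) → ℝ) (hψp : ∀ i, ψp i = ∑ k, ∑ j, ψ i k j)
    (ψw : Fin (m+1) → ℝ) (hψw : ∀ j, ψw j = ∑ i, ∑ k, ψ i k j)
    (ψpw : Matrix (Fin (n+1)) (Fin (m+1)) ℝ) (hψpw : ∀ i j, ψpw i j = ∑ k, ψ i k j)
    (M : Matrix (Fin (n+1) ⊕ Fin (m+1)) (Fin (n+1) ⊕ Fin (m+1)) ℝ)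
    (hMpp : ∀ i i', M (Sum.inl i) (Sum.inl i') = (if i = i' then ψp i else 0) - ψp i * ψp i')
    (hMww : ∀ j j', M (Sum.inr j) (Sum.inr j') = (if j = j' then ψw j else 0) - ψw j * ψw j')
    (hMpw : ∀ i j, M (Sum.inl i) (Sum.inr j) = ψpw i j - ψp i * ψw j)
    (hMwp : ∀ i j, M (Sum.inr j) (Sum.inl i) = ψpw i j - ψp i * ψw j)
    (Mhat : Matrix (Fin n ⊕ Fin m) (Fin (n+1) ⊕ Fin (m+1)) ℝ)
    (hMhatp : ∀ (i : Fin n) t, Mhat (Sum.inl i) t = M (Sum.inl i.castSucc) t)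
    (hMhatw : ∀ (j : Fin m) t, Mhat (Sum.inr j) t = M (Sum.inr j.castSucc) t)
    (hpos : ∀ i j, 0 < ψpw i j) :
    Mhat.rank = n + m ∧
    (fun t => M (Sum.inl (Fin.last n)) t) ∈
      Submodule.span ℝ (Set.range fun s => fun t => Mhat s t) ∧
    (fun t => M (Sum.inr (Fin.last m)) t) ∈
      Submodule.span ℝ (Set.range fun s => fun t => Mhat s t) ∧
    Submodule.span ℝ (Set.range fun s => fun t => M s t)
      = Submodule.span ℝ (Set.range fun s => fun t => Mhat s t) := by
  have htot : ∑ i, ∑ j, ψpw i j = 1 := by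
    simpa only [hψpw, Finset.sum_comm (γ := Fin l)] using hψ1
  have hM : M = pairCov ψpw := by
    have hp : ψpw *ᵥ 1 = ψp := funext fun i => by
      simp [mulVec, dotProduct, hψp, hψpw, Finset.sum_comm (γ := Fin l)]
    have hw : 1 ᵥ* ψpw = ψw := funext fun j => by simp [vecMul, dotProduct, hψw, hψpw]
    rw [pairCov_eq_fromBlocks ψpw htot, hp, hw]
    ext (i | j) (i' | j') <;> simp [hMpp, hMpw, hMwp, hMww, diagonal_apply, vecMulVec_apply,
      mul_comm]
  have hMhat : Mhat = M.submatrix (Sum.map Fin.castSucc Fin.castSucc) id := by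
    ext (i | j) t <;> simp [hMhatp, hMhatw]
  have hsum_inl : ∑ a, M (.inl a) = 0 := hM ▸ sum_pairCov_inl ψpw htot
  have hsum_inr : ∑ b, M (.inr b) = 0 := hM ▸ sum_pairCov_inr ψpw htot
  have hind : LinearIndependent ℝ Mhat := hMhat ▸ linearIndependent_submatrix_castSucc M
    fun x hx => ⟨_, fun a b => ((vecMul_pairCov_eq_zero_iff ψpw (fun a b => (hpos a b).le) x).1
      (hM ▸ hx)) a b (hpos a b).ne'⟩
  have hrank : Mhat.rank = n + m := (hind.rank_matrix (M := Mhat)).trans (by simp)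
  subst hMhat
  exact ⟨hrank, inl_last_mem_span_range_submatrix_castSucc M hsum_inl,
    inr_last_mem_span_range_submatrix_castSucc M hsum_inr,
    (span_range_submatrix_castSucc M hsum_inl hsum_inr).symm⟩

theorem stmt_8 (n m l : ℕ) (hl : 1 ≤ l)
    (p : Fin (n+1) → ℝ) (q : Fin l → ℝ) (w : Fin (m+1) → ℝ)
    (ψ : Fin (n+1) → Fin l → Fin (m+1) → ℝ)
    (hψ0 : ∀ i k j, 0 ≤ ψ i k j)
    (hψ1 : ∑ i, ∑ k, ∑ j, ψ i k j = 1)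
    (ψp : Fin (n+1) → ℝ) (hψp : ∀ i, ψp i = ∑ k, ∑ j, ψ i k j)
    (ψw : Fin (m+1) → ℝ) (hψw : ∀ j, ψw j = ∑ i, ∑ k, ψ i k j)
    (ψpw : Matrix (Fin (n+1)) (Fin (m+1)) ℝ) (hψpw : ∀ i j, ψpw i j = ∑ k, ψ i k j)
    (M : Matrix (Fin (n+1) ⊕ Fin (m+1)) (Fin (n+1) ⊕ Fin (m+1)) ℝ)
    (hMpp : ∀ i i', M (Sum.inl i) (Sum.inl i') = (if i = i' then ψp i else 0) - ψp i * ψp i')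
    (hMww : ∀ j j', M (Sum.inr j) (Sum.inr j') = (if j = j' then ψw j else 0) - ψw j * ψw j')
    (hMpw : ∀ i j, M (Sum.inl i) (Sum.inr j) = ψpw i j - ψp i * ψw j)
    (hMwp : ∀ i j, M (Sum.inr j) (Sum.inl i) = ψpw i j - ψp i * ψw j)
    (Mhat : Matrix (Fin n ⊕ Fin m) (Fin (n+1) ⊕ Fin (m+1)) ℝ)
    (hMhatp : ∀ (i : Fin n) t, Mhat (Sum.inl i) t = M (Sum.inl i.castSucc) t)
    (hMhatw : ∀ (j : Fin m) t, Mhat (Sum.inr j) t = M (Sum.inr j.castSucc) t)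
    (hpos : ∀ i j, 0 < ψpw i j) :
    Mhat.rank = n + m ∧
    (fun t => M (Sum.inl (Fin.last n)) t) ∈
      Submodule.span ℝ (Set.range fun s => fun t => Mhat s t) ∧
    (fun t => M (Sum.inr (Fin.last m)) t) ∈
      Submodule.span ℝ (Set.range fun s => fun t => Mhat s t) ∧
    Submodule.span ℝ (Set.range fun s => fun t => M s t)
      = Submodule.span ℝ (Set.range fun s => fun t => Mhat s t) :=
  stmt_8_general n m l ψ hψ1 ψp hψp ψw hψw ψpw hψpw M hMpp hMww hMpw hMwp Mhat hMhatp hMhatw hpos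
end

section
/- Let a > 0. A pair (x_P, x_W) ∈ ℝ^n × ℝ^m with x = (x_P, x_W) is an optimal solution of the hedging problem — i.e. it satisfies φ_p^T x_P = 0 and φ_w^T x_W = 0 and maximizes F_a(x_P,x_W) = E^ψ[Y] − a Var^ψ[Y] over all pairs satisfying those two constraints — if and only if there exist λ_p, λ_w ∈ ℝ such that 2a M x + B (λ_p, λ_w)^T = 2a c + d and B^T x = 0. -/
open Finset Matrix

/-!
Index the outcomes by `ω = (i, k, j)` and let `E` be the 0/1 design matrix whose row `ω` picks out
`x_P(i)` and `x_W(j)`, so that the hedged profit is `Y = y + E x`. With `S = Diag ψ - ψ ψᵀ` one has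
`Var Y = (y + E x)ᵀ S (y + E x)`, hence `F_a(x) = F_a(0) + (d + 2a c) ⬝ x - a xᵀ M x` where
`d = Eᵀ ψ`, `c = -Eᵀ S y` and `M = Eᵀ S E` is positive semidefinite. A concave quadratic is
maximal on the subspace `ker Bᵀ` at `x` exactly when its gradient `d + 2a c - 2a M x` is orthogonal
to `ker Bᵀ`, that is, lies in the range of `B`: these are the Lagrange conditions.
-/

namespace Matrix

section Semiring

variable {R ι κ : Type*} [CommSemiring R] [Fintype ι] [Fintype κ]

theorem transpose_mulVec_dotProduct (E : Matrix κ ι R) (u : κ → R) (x : ι → R) :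
    Eᵀ *ᵥ u ⬝ᵥ x = u ⬝ᵥ E *ᵥ x := by
  rw [dotProduct_comm, dotProduct_transpose_mulVec]

theorem add_dotProduct_mulVec_add {M : Matrix ι ι R} (hM : M.IsSymm) (x h : ι → R) :
    (x + h) ⬝ᵥ M *ᵥ (x + h) = x ⬝ᵥ M *ᵥ x + 2 * (M *ᵥ x ⬝ᵥ h) + h ⬝ᵥ M *ᵥ h := by
  have hcross : x ⬝ᵥ M *ᵥ h = M *ᵥ x ⬝ᵥ h := by
    rw [dotProduct_mulVec, ← mulVec_transpose, hM.eq]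
  rw [mulVec_add, dotProduct_add, add_dotProduct, add_dotProduct, hcross,
    dotProduct_comm h (M *ᵥ x)]
  ring

end Semiring

variable {K ι κ : Type*} [Field K] [Fintype ι] [Fintype κ] [DecidableEq ι] [DecidableEq κ]

theorem exists_mulVec_eq_iff_forall_dotProduct_eq_zero (B : Matrix ι κ K) (g : ι → K) :
    (∃ μ, B *ᵥ μ = g) ↔ ∀ v, Bᵀ *ᵥ v = 0 → g ⬝ᵥ v = 0 := by
  constructor
  · rintro ⟨μ, rfl⟩ v hv
    rw [dotProduct_comm, ← dotProduct_transpose_mulVec, hv, dotProduct_zero]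
  · intro hg
    have hmem : dotProductEquiv K ι g ∈ (LinearMap.ker Bᵀ.mulVecLin).dualAnnihilator :=
      (Submodule.mem_dualAnnihilator _).2 hg
    rw [← LinearMap.range_dualMap_eq_dualAnnihilator_ker] at hmem
    obtain ⟨φ, hφ⟩ := hmem
    set μ := (dotProductEquiv K κ).symm φ
    refine ⟨μ, (dotProductEquiv K ι).injective (LinearMap.ext fun v => ?_)⟩
    calc B *ᵥ μ ⬝ᵥ v = μ ⬝ᵥ Bᵀ *ᵥ v := by
          rw [dotProduct_comm, dotProduct_transpose_mulVec]
      _ = φ (Bᵀ *ᵥ v) := by rw [← dotProductEquiv_apply_apply, LinearEquiv.apply_symm_apply]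
      _ = g ⬝ᵥ v := LinearMap.congr_fun hφ v

end Matrix

theorem eq_zero_of_forall_mul_le_mul_sq {c K : ℝ} (hK : 0 ≤ K) (h : ∀ t, t * c ≤ K * t ^ 2) :
    c = 0 := by
  have hK1 : 0 < K + 1 := by linarith
  have ht := h (c / (K + 1))
  have : c ^ 2 ≤ 0 := by
    field_simp at ht
    nlinarith [sq_nonneg c]
  exact pow_eq_zero_iff two_ne_zero |>.1 (le_antisymm this (sq_nonneg c))

section ConstrainedMax

variable {ι κ : Type*} [Fintype ι] [Fintype κ] [DecidableEq ι] [DecidableEq κ]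

theorem isMaxOn_quadratic_iff {M : Matrix ι ι ℝ} (hM : M.PosSemidef) (B : Matrix ι κ ℝ)
    (b : ι → ℝ) {a : ℝ} (ha : 0 ≤ a) {x : ι → ℝ} (hx : Bᵀ *ᵥ x = 0) :
    IsMaxOn (fun x => b ⬝ᵥ x - a * (x ⬝ᵥ M *ᵥ x)) {x | Bᵀ *ᵥ x = 0} x ↔
      ∃ μ, (2 * a) • M *ᵥ x + B *ᵥ μ = b := by
  set g := b - (2 * a) • M *ᵥ x
  have hsymm : M.IsSymm := hM.isHermitian
  have hstep : ∀ h, b ⬝ᵥ (x + h) - a * ((x + h) ⬝ᵥ M *ᵥ (x + h))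
      = b ⬝ᵥ x - a * (x ⬝ᵥ M *ᵥ x) + g ⬝ᵥ h - a * (h ⬝ᵥ M *ᵥ h) := by
    intro h
    rw [add_dotProduct_mulVec_add hsymm, dotProduct_add]
    simp only [g, sub_dotProduct, smul_dotProduct, smul_eq_mul]
    ring
  have hnonneg : ∀ h, 0 ≤ h ⬝ᵥ M *ᵥ h := by simpa using hM.dotProduct_mulVec_nonneg
  have hsolve : (∃ μ, (2 * a) • M *ᵥ x + B *ᵥ μ = b) ↔ ∃ μ, B *ᵥ μ = g := by
    simp only [g, eq_sub_iff_add_eq']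
  rw [hsolve, exists_mulVec_eq_iff_forall_dotProduct_eq_zero, isMaxOn_iff]
  constructor
  · intro hmax h hh
    refine eq_zero_of_forall_mul_le_mul_sq (mul_nonneg ha (hnonneg h)) fun t => ?_
    have := hmax (x + t • h) (by simp [mulVec_add, mulVec_smul, hx, hh])
    simp only [hstep, dotProduct_smul, smul_dotProduct, mulVec_smul, smul_eq_mul] at this
    nlinarith
  · intro hg x' hx'
    have hh : Bᵀ *ᵥ (x' - x) = 0 := by simpa [mulVec_sub, hx] using hx'
    have := hstep (x' - x)
    rw [add_sub_cancel] at this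
    simp only [this, hg _ hh]
    nlinarith [mul_nonneg ha (hnonneg (x' - x))]

theorem and_isMaxOn_quadratic_iff {M : Matrix ι ι ℝ} (hM : M.PosSemidef) (B : Matrix ι κ ℝ)
    (b : ι → ℝ) {a : ℝ} (ha : 0 ≤ a) (x : ι → ℝ) :
    (Bᵀ *ᵥ x = 0 ∧ IsMaxOn (fun x => b ⬝ᵥ x - a * (x ⬝ᵥ M *ᵥ x)) {x | Bᵀ *ᵥ x = 0} x) ↔
      ∃ μ, (2 * a) • M *ᵥ x + B *ᵥ μ = b ∧ Bᵀ *ᵥ x = 0 :=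
  ⟨fun ⟨hx, hmax⟩ => ((isMaxOn_quadratic_iff hM B b ha hx).1 hmax).imp fun _ hμ => ⟨hμ, hx⟩,
    fun ⟨μ, hμ, hx⟩ => ⟨hx, (isMaxOn_quadratic_iff hM B b ha hx).2 ⟨μ, hμ⟩⟩⟩

end ConstrainedMax

theorem isMaxOn_sum_elim_iff {ι τ β : Type*} [Preorder β] {f : (ι ⊕ τ → ℝ) → β}
    {s : Set (ι ⊕ τ → ℝ)} {u : ι → ℝ} {v : τ → ℝ} :
    IsMaxOn f s (Sum.elim u v) ↔
      ∀ u' v', Sum.elim u' v' ∈ s → f (Sum.elim u' v') ≤ f (Sum.elim u v) := by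
  rw [isMaxOn_iff]
  exact ⟨fun h u' v' => h _, fun h x => by simpa using h (x ∘ Sum.inl) (x ∘ Sum.inr)⟩

section MeanVariance

variable {Ω ι : Type*} [Fintype Ω] [DecidableEq Ω] [Fintype ι]

/-- The covariance matrix of the indicator vector `(1_{ω = ω'})_{ω'}` when `ω ∼ π`. -/
def categoricalCov (π : Ω → ℝ) : Matrix Ω Ω ℝ := diagonal π - vecMulVec π π

omit [Fintype Ω] in
theorem categoricalCov_isSymm (π : Ω → ℝ) : (categoricalCov π).IsSymm := by
  simp [categoricalCov, IsSymm, transpose_sub]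

theorem categoricalCov_mulVec (π Y : Ω → ℝ) :
    categoricalCov π *ᵥ Y = π * Y - (π ⬝ᵥ Y) • π := by
  ext ω
  simp [categoricalCov, sub_mulVec, mulVec_diagonal, vecMulVec_mulVec]

theorem sum_mul_sub_sq_eq_dotProduct_categoricalCov_mulVec {π : Ω → ℝ} (hπ : ∑ ω, π ω = 1)
    (Y : Ω → ℝ) :
    ∑ ω, π ω * (Y ω - ∑ ω', π ω' * Y ω') ^ 2 = Y ⬝ᵥ categoricalCov π *ᵥ Y := by
  have hsq : ∀ m, ∑ ω, π ω * (Y ω - m) ^ 2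
      = ∑ ω, π ω * Y ω ^ 2 - 2 * m * ∑ ω, π ω * Y ω + m ^ 2 * ∑ ω, π ω := fun m => by
    rw [mul_sum, mul_sum, ← sum_sub_distrib, ← sum_add_distrib]
    exact sum_congr rfl fun ω _ => by ring
  have hYπY : ∑ ω, Y ω * (π ω * Y ω) = ∑ ω, π ω * Y ω ^ 2 := sum_congr rfl fun ω _ => by ring
  rw [hsq, hπ, categoricalCov_mulVec, dotProduct_sub, dotProduct_smul, dotProduct_comm Y π]
  simp only [dotProduct, Pi.mul_apply, smul_eq_mul, hYπY]
  ring

theorem posSemidef_categoricalCov {π : Ω → ℝ} (hπ0 : ∀ ω, 0 ≤ π ω) (hπ : ∑ ω, π ω = 1) :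
    (categoricalCov π).PosSemidef := by
  refine .of_dotProduct_mulVec_nonneg (categoricalCov_isSymm π) fun Y => ?_
  rw [star_trivial, ← sum_mul_sub_sq_eq_dotProduct_categoricalCov_mulVec hπ]
  exact sum_nonneg fun ω _ => mul_nonneg (hπ0 ω) (sq_nonneg _)

omit [Fintype ι] in
theorem transpose_mul_categoricalCov_mul (E : Matrix Ω ι ℝ) (π : Ω → ℝ) :
    Eᵀ * categoricalCov π * E = Eᵀ * diagonal π * E - vecMulVec (Eᵀ *ᵥ π) (Eᵀ *ᵥ π) := by
  rw [categoricalCov, Matrix.mul_sub, Matrix.sub_mul, mul_vecMulVec, vecMulVec_mul,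
    mulVec_transpose]

theorem posSemidef_transpose_mul_categoricalCov_mul {π : Ω → ℝ} (hπ0 : ∀ ω, 0 ≤ π ω)
    (hπ : ∑ ω, π ω = 1) (E : Matrix Ω ι ℝ) : (Eᵀ * categoricalCov π * E).PosSemidef := by
  rw [← conjTranspose_eq_transpose_of_trivial]
  exact (posSemidef_categoricalCov hπ0 hπ).conjTranspose_mul_mul_same E

def meanVariance (π : Ω → ℝ) (a : ℝ) (Y : Ω → ℝ) : ℝ :=
  ∑ ω, π ω * Y ω - a * ∑ ω, π ω * (Y ω - ∑ ω', π ω' * Y ω') ^ 2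

theorem meanVariance_eq {π : Ω → ℝ} (hπ : ∑ ω, π ω = 1) (a : ℝ) (Y : Ω → ℝ) :
    meanVariance π a Y = π ⬝ᵥ Y - a * (Y ⬝ᵥ categoricalCov π *ᵥ Y) := by
  rw [meanVariance, sum_mul_sub_sq_eq_dotProduct_categoricalCov_mulVec hπ]
  rfl

theorem meanVariance_add_mulVec {π : Ω → ℝ} (hπ : ∑ ω, π ω = 1) (a : ℝ) (Y : Ω → ℝ)
    (E : Matrix Ω ι ℝ) (x : ι → ℝ) :
    meanVariance π a (Y + E *ᵥ x) = meanVariance π a Y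
      + (Eᵀ *ᵥ π - (2 * a) • Eᵀ *ᵥ categoricalCov π *ᵥ Y) ⬝ᵥ x
      - a * (x ⬝ᵥ (Eᵀ * categoricalCov π * E) *ᵥ x) := by
  have hquad : x ⬝ᵥ (Eᵀ * categoricalCov π * E) *ᵥ x
      = E *ᵥ x ⬝ᵥ categoricalCov π *ᵥ E *ᵥ x := by
    rw [← mulVec_mulVec, ← mulVec_mulVec, dotProduct_transpose_mulVec, dotProduct_comm]
  rw [meanVariance_eq hπ, meanVariance_eq hπ, add_dotProduct_mulVec_add (categoricalCov_isSymm π),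
    hquad, sub_dotProduct, smul_dotProduct, transpose_mulVec_dotProduct,
    transpose_mulVec_dotProduct, dotProduct_add, smul_eq_mul]
  ring

end MeanVariance

/-- Row `(i, k, j)` picks out the hedge payoffs `x_P(i)` and `x_W(j)` received in that outcome. -/
def hedgeDesign (ι κ τ : Type*) [DecidableEq ι] [DecidableEq τ] :
    Matrix (ι × κ × τ) (ι ⊕ τ) ℝ :=
  of fun ω => Sum.elim (Pi.single ω.1 1) (Pi.single ω.2.2 1)

section Hedging

variable {ι κ τ : Type*} [Fintype ι] [Fintype κ] [Fintype τ] [DecidableEq ι] [DecidableEq κ]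
  [DecidableEq τ]

omit [Fintype κ] [DecidableEq κ] in
theorem hedgeDesign_mulVec (u : ι → ℝ) (v : τ → ℝ) :
    hedgeDesign ι κ τ *ᵥ Sum.elim u v = fun ω => u ω.1 + v ω.2.2 := by
  ext ω
  simp [hedgeDesign, mulVec, dotProduct, Fintype.sum_sum_type, Pi.single_apply]

-- The sums are split before `hedgeDesign` is unfolded: otherwise the decidability instances of
-- the indicators mention the unreduced `(i, k, j).1` and `sum_ite_irrel` no longer applies.
omit [DecidableEq κ] in
theorem hedgeDesign_transpose_mulVec (f : ι × κ × τ → ℝ) :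
    (hedgeDesign ι κ τ)ᵀ *ᵥ f
      = Sum.elim (fun i => ∑ k, ∑ j, f (i, k, j)) (fun j => ∑ i, ∑ k, f (i, k, j)) := by
  ext (i | j) <;>
  · simp only [mulVec, dotProduct, transpose_apply, Fintype.sum_prod_type]
    simp [hedgeDesign, Pi.single_apply]

theorem hedgeDesign_transpose_mul_diagonal_mul (π : ι × κ × τ → ℝ) :
    (hedgeDesign ι κ τ)ᵀ * diagonal π * hedgeDesign ι κ τ = fromBlocks
      (diagonal fun i => ∑ k, ∑ j, π (i, k, j)) (of fun i j => ∑ k, π (i, k, j))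
      (of fun j i => ∑ k, π (i, k, j)) (diagonal fun j => ∑ i, ∑ k, π (i, k, j)) := by
  rw [Matrix.mul_assoc]
  ext (i | j) (i' | j') <;>
  · rw [mul_apply]
    simp only [diagonal_mul, transpose_apply, Fintype.sum_prod_type]
    simp +contextual [hedgeDesign, Pi.single_apply, diagonal_apply]

omit [DecidableEq κ] in
theorem sum_sum_sum_sub_eq_meanVariance (ψ : ι → κ → τ → ℝ) (y : ι → κ → ℝ) (a : ℝ)
    (u : ι → ℝ) (v : τ → ℝ) :
    (∑ i, ∑ k, ∑ j, ψ i k j * (y i k + u i + v j)) -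
      a * (∑ i, ∑ k, ∑ j, ψ i k j *
        (y i k + u i + v j - ∑ i', ∑ k', ∑ j', ψ i' k' j' * (y i' k' + u i' + v j')) ^ 2)
      = meanVariance (fun ω : ι × κ × τ => ψ ω.1 ω.2.1 ω.2.2) a
          ((fun ω : ι × κ × τ => y ω.1 ω.2.1) + hedgeDesign ι κ τ *ᵥ Sum.elim u v) := by
  rw [meanVariance, hedgeDesign_mulVec]
  simp [Fintype.sum_prod_type, add_assoc]

omit [DecidableEq κ] in
theorem hedgeDesign_transpose_mulVec_weights {ψ : ι → κ → τ → ℝ} {ψp : ι → ℝ} {ψw : τ → ℝ}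
    (hψp : ∀ i, ψp i = ∑ k, ∑ j, ψ i k j) (hψw : ∀ j, ψw j = ∑ i, ∑ k, ψ i k j) :
    (hedgeDesign ι κ τ)ᵀ *ᵥ (fun ω : ι × κ × τ => ψ ω.1 ω.2.1 ω.2.2) = Sum.elim ψp ψw := by
  rw [hedgeDesign_transpose_mulVec]
  ext (i | j) <;> simp [hψp, hψw]

theorem hedgeDesign_transpose_mulVec_categoricalCov_mulVec {ψ : ι → κ → τ → ℝ} {y : ι → κ → ℝ}
    {ψp vp cp : ι → ℝ} {ψw vw cw : τ → ℝ} {μy : ℝ}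
    (hψp : ∀ i, ψp i = ∑ k, ∑ j, ψ i k j) (hψw : ∀ j, ψw j = ∑ i, ∑ k, ψ i k j)
    (hμy : μy = ∑ i, ∑ k, ∑ j, ψ i k j * y i k)
    (hvp : ∀ i, vp i = ∑ k, ∑ j, ψ i k j * y i k) (hvw : ∀ j, vw j = ∑ i, ∑ k, ψ i k j * y i k)
    (hcp : ∀ i, cp i = μy * ψp i - vp i) (hcw : ∀ j, cw j = μy * ψw j - vw j) :
    (hedgeDesign ι κ τ)ᵀ *ᵥ categoricalCov (fun ω : ι × κ × τ => ψ ω.1 ω.2.1 ω.2.2)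
      *ᵥ (fun ω : ι × κ × τ => y ω.1 ω.2.1) = -Sum.elim cp cw := by
  rw [categoricalCov_mulVec, mulVec_sub, mulVec_smul, hedgeDesign_transpose_mulVec_weights hψp hψw,
    hedgeDesign_transpose_mulVec]
  ext (i | j) <;> simp [hμy, hvp, hvw, hcp, hcw, dotProduct, Fintype.sum_prod_type]

theorem hedgeDesign_transpose_mul_categoricalCov_mul {ψ : ι → κ → τ → ℝ} {ψp : ι → ℝ}
    {ψw : τ → ℝ} {ψpw : Matrix ι τ ℝ} {M : Matrix (ι ⊕ τ) (ι ⊕ τ) ℝ}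
    (hψp : ∀ i, ψp i = ∑ k, ∑ j, ψ i k j) (hψw : ∀ j, ψw j = ∑ i, ∑ k, ψ i k j)
    (hψpw : ∀ i j, ψpw i j = ∑ k, ψ i k j)
    (hMpp : ∀ i i', M (Sum.inl i) (Sum.inl i') = (if i = i' then ψp i else 0) - ψp i * ψp i')
    (hMww : ∀ j j', M (Sum.inr j) (Sum.inr j') = (if j = j' then ψw j else 0) - ψw j * ψw j')
    (hMpw : ∀ i j, M (Sum.inl i) (Sum.inr j) = ψpw i j - ψp i * ψw j)
    (hMwp : ∀ i j, M (Sum.inr j) (Sum.inl i) = ψpw i j - ψp i * ψw j) :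
    (hedgeDesign ι κ τ)ᵀ * categoricalCov (fun ω : ι × κ × τ => ψ ω.1 ω.2.1 ω.2.2)
      * hedgeDesign ι κ τ = M := by
  rw [transpose_mul_categoricalCov_mul, hedgeDesign_transpose_mul_diagonal_mul,
    hedgeDesign_transpose_mulVec_weights hψp hψw]
  ext (i | j) (i' | j') <;>
    simp [hMpp, hMpw, hMwp, hMww, hψp, hψw, hψpw, diagonal_apply, vecMulVec_apply]
  ring

omit [Fintype κ] [DecidableEq ι] [DecidableEq κ] [DecidableEq τ] in
theorem transpose_mulVec_sum_elim_eq_zero_iff {B : Matrix (ι ⊕ τ) (Fin 2) ℝ} {φp : ι → ℝ}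
    {φw : τ → ℝ} (hBp0 : ∀ i, B (Sum.inl i) 0 = φp i) (hBp1 : ∀ i, B (Sum.inl i) 1 = 0)
    (hBw0 : ∀ j, B (Sum.inr j) 0 = 0) (hBw1 : ∀ j, B (Sum.inr j) 1 = φw j)
    (u : ι → ℝ) (v : τ → ℝ) :
    Bᵀ *ᵥ Sum.elim u v = 0 ↔ (∑ i, φp i * u i) = 0 ∧ (∑ j, φw j * v j) = 0 := by
  rw [funext_iff, Fin.forall_fin_two]
  simp [mulVec, dotProduct, Fintype.sum_sum_type, hBp0, hBp1, hBw0, hBw1]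

end Hedging

theorem stmt_10_general (n m l : ℕ)
    (ψ : Fin n → Fin l → Fin m → ℝ)
    (hψ0 : ∀ i k j, 0 ≤ ψ i k j)
    (hψ1 : ∑ i, ∑ k, ∑ j, ψ i k j = 1)
    (ψp : Fin n → ℝ) (hψp : ∀ i, ψp i = ∑ k, ∑ j, ψ i k j)
    (ψw : Fin m → ℝ) (hψw : ∀ j, ψw j = ∑ i, ∑ k, ψ i k j)
    (ψpw : Matrix (Fin n) (Fin m) ℝ) (hψpw : ∀ i j, ψpw i j = ∑ k, ψ i k j)
    (y : Fin n → Fin l → ℝ)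
    (μy : ℝ) (hμy : μy = ∑ i, ∑ k, ∑ j, ψ i k j * y i k)
    (vp : Fin n → ℝ) (hvp : ∀ i, vp i = ∑ k, ∑ j, ψ i k j * y i k)
    (vw : Fin m → ℝ) (hvw : ∀ j, vw j = ∑ i, ∑ k, ψ i k j * y i k)
    (cp : Fin n → ℝ) (hcp : ∀ i, cp i = μy * ψp i - vp i)
    (cw : Fin m → ℝ) (hcw : ∀ j, cw j = μy * ψw j - vw j)
    (M : Matrix (Fin n ⊕ Fin m) (Fin n ⊕ Fin m) ℝ)
    (hMpp : ∀ i i', M (Sum.inl i) (Sum.inl i') = (if i = i' then ψp i else 0) - ψp i * ψp i')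
    (hMww : ∀ j j', M (Sum.inr j) (Sum.inr j') = (if j = j' then ψw j else 0) - ψw j * ψw j')
    (hMpw : ∀ i j, M (Sum.inl i) (Sum.inr j) = ψpw i j - ψp i * ψw j)
    (hMwp : ∀ i j, M (Sum.inr j) (Sum.inl i) = ψpw i j - ψp i * ψw j)
    (φp : Fin n → ℝ)
    (φw : Fin m → ℝ)
    (B : Matrix (Fin n ⊕ Fin m) (Fin 2) ℝ)
    (hBp0 : ∀ i, B (Sum.inl i) 0 = φp i) (hBp1 : ∀ i, B (Sum.inl i) 1 = 0)
    (hBw0 : ∀ j, B (Sum.inr j) 0 = 0) (hBw1 : ∀ j, B (Sum.inr j) 1 = φw j)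
    (a : ℝ) (ha : 0 < a)
    (F : (Fin n → ℝ) → (Fin m → ℝ) → ℝ)
    (hF : ∀ (xP : Fin n → ℝ) (xW : Fin m → ℝ), F xP xW =
      (∑ i, ∑ k, ∑ j, ψ i k j * (y i k + xP i + xW j)) -
      a * (∑ i, ∑ k, ∑ j, ψ i k j *
        (y i k + xP i + xW j - ∑ i', ∑ k', ∑ j', ψ i' k' j' * (y i' k' + xP i' + xW j'))^2))
    (xP : Fin n → ℝ) (xW : Fin m → ℝ) :
    ((∑ i, φp i * xP i) = 0 ∧ (∑ j, φw j * xW j) = 0 ∧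
      ∀ (xP' : Fin n → ℝ) (xW' : Fin m → ℝ),
        (∑ i, φp i * xP' i) = 0 → (∑ j, φw j * xW' j) = 0 → F xP' xW' ≤ F xP xW)
    ↔ ∃ lp lw : ℝ,
        (2*a) • M.mulVec (Sum.elim xP xW) + B.mulVec ![lp, lw]
          = (2*a) • Sum.elim cp cw + Sum.elim ψp ψw ∧
        B.transpose.mulVec (Sum.elim xP xW) = 0 := by
  set π : Fin n × Fin l × Fin m → ℝ := fun ω => ψ ω.1 ω.2.1 ω.2.2
  have hπ1 : ∑ ω, π ω = 1 := by simpa [π, Fintype.sum_prod_type] using hψ1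
  have hM := hedgeDesign_transpose_mul_categoricalCov_mul hψp hψw hψpw hMpp hMww hMpw hMwp
  have hMpsd : M.PosSemidef :=
    hM ▸ posSemidef_transpose_mul_categoricalCov_mul (fun _ => hψ0 _ _ _) hπ1 _
  set b := (2 * a) • Sum.elim cp cw + Sum.elim ψp ψw
  have hF' : ∀ u v, F u v = meanVariance π a (fun ω => y ω.1 ω.2.1)
      + (b ⬝ᵥ Sum.elim u v - a * (Sum.elim u v ⬝ᵥ M *ᵥ Sum.elim u v)) := by
    intro u v
    rw [hF, sum_sum_sum_sub_eq_meanVariance, meanVariance_add_mulVec hπ1,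
      hedgeDesign_transpose_mulVec_weights hψp hψw,
      hedgeDesign_transpose_mulVec_categoricalCov_mulVec hψp hψw hμy hvp hvw hcp hcw, hM]
    simp only [b, add_dotProduct, sub_dotProduct, neg_dotProduct, smul_dotProduct]
    ring
  have hker := transpose_mulVec_sum_elim_eq_zero_iff hBp0 hBp1 hBw0 hBw1
  have hopt : (∀ u v, (∑ i, φp i * u i) = 0 → (∑ j, φw j * v j) = 0 → F u v ≤ F xP xW) ↔
      IsMaxOn (fun x => b ⬝ᵥ x - a * (x ⬝ᵥ M *ᵥ x)) {x | Bᵀ *ᵥ x = 0} (Sum.elim xP xW) := by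
    simp only [isMaxOn_sum_elim_iff, Set.mem_ofPred_eq, hker, hF', add_le_add_iff_left, and_imp]
  rw [← and_assoc, ← hker, hopt, and_isMaxOn_quadratic_iff hMpsd B b ha.le]
  exact (FinVec.exists_iff _).symm

theorem stmt_10 (n m l : ℕ) (hn : 1 ≤ n) (hm : 1 ≤ m) (hl : 1 ≤ l)
    (p : Fin n → ℝ) (q : Fin l → ℝ) (w : Fin m → ℝ)
    (ψ : Fin n → Fin l → Fin m → ℝ)
    (hψ0 : ∀ i k j, 0 ≤ ψ i k j)
    (hψ1 : ∑ i, ∑ k, ∑ j, ψ i k j = 1)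
    (ψp : Fin n → ℝ) (hψp : ∀ i, ψp i = ∑ k, ∑ j, ψ i k j)
    (ψw : Fin m → ℝ) (hψw : ∀ j, ψw j = ∑ i, ∑ k, ψ i k j)
    (ψpw : Matrix (Fin n) (Fin m) ℝ) (hψpw : ∀ i j, ψpw i j = ∑ k, ψ i k j)
    (r : ℝ) (y : Fin n → Fin l → ℝ) (hy : ∀ i k, y i k = (r - p i) * q k)
    (μy : ℝ) (hμy : μy = ∑ i, ∑ k, ∑ j, ψ i k j * y i k)
    (vp : Fin n → ℝ) (hvp : ∀ i, vp i = ∑ k, ∑ j, ψ i k j * y i k)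
    (vw : Fin m → ℝ) (hvw : ∀ j, vw j = ∑ i, ∑ k, ψ i k j * y i k)
    (cp : Fin n → ℝ) (hcp : ∀ i, cp i = μy * ψp i - vp i)
    (cw : Fin m → ℝ) (hcw : ∀ j, cw j = μy * ψw j - vw j)
    (M : Matrix (Fin n ⊕ Fin m) (Fin n ⊕ Fin m) ℝ)
    (hMpp : ∀ i i', M (Sum.inl i) (Sum.inl i') = (if i = i' then ψp i else 0) - ψp i * ψp i')
    (hMww : ∀ j j', M (Sum.inr j) (Sum.inr j') = (if j = j' then ψw j else 0) - ψw j * ψw j')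
    (hMpw : ∀ i j, M (Sum.inl i) (Sum.inr j) = ψpw i j - ψp i * ψw j)
    (hMwp : ∀ i j, M (Sum.inr j) (Sum.inl i) = ψpw i j - ψp i * ψw j)
    (φ : Fin n → Fin m → ℝ)
    (hφ0 : ∀ i j, 0 ≤ φ i j) (hφ1 : ∑ i, ∑ j, φ i j = 1)
    (φp : Fin n → ℝ) (hφp : ∀ i, φp i = ∑ j, φ i j)
    (φw : Fin m → ℝ) (hφw : ∀ j, φw j = ∑ i, φ i j)
    (B : Matrix (Fin n ⊕ Fin m) (Fin 2) ℝ)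
    (hBp0 : ∀ i, B (Sum.inl i) 0 = φp i) (hBp1 : ∀ i, B (Sum.inl i) 1 = 0)
    (hBw0 : ∀ j, B (Sum.inr j) 0 = 0) (hBw1 : ∀ j, B (Sum.inr j) 1 = φw j)
    (a : ℝ) (ha : 0 < a)
    (F : (Fin n → ℝ) → (Fin m → ℝ) → ℝ)
    (hF : ∀ (xP : Fin n → ℝ) (xW : Fin m → ℝ), F xP xW =
      (∑ i, ∑ k, ∑ j, ψ i k j * (y i k + xP i + xW j)) -
      a * (∑ i, ∑ k, ∑ j, ψ i k j *
        (y i k + xP i + xW j - ∑ i', ∑ k', ∑ j', ψ i' k' j' * (y i' k' + xP i' + xW j'))^2))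
    (xP : Fin n → ℝ) (xW : Fin m → ℝ) :
    ((∑ i, φp i * xP i) = 0 ∧ (∑ j, φw j * xW j) = 0 ∧
      ∀ (xP' : Fin n → ℝ) (xW' : Fin m → ℝ),
        (∑ i, φp i * xP' i) = 0 → (∑ j, φw j * xW' j) = 0 → F xP' xW' ≤ F xP xW)
    ↔ ∃ lp lw : ℝ,
        (2*a) • M.mulVec (Sum.elim xP xW) + B.mulVec ![lp, lw]
          = (2*a) • Sum.elim cp cw + Sum.elim ψp ψw ∧
        B.transpose.mulVec (Sum.elim xP xW) = 0 :=
  stmt_10_general n m l ψ hψ0 hψ1 ψp hψp ψw hψw ψpw hψpw y μy hμy vp hvp vw hvw cp hcp cw hcw M hMpp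
    hMww hMpw hMwp φp φw B hBp0 hBp1 hBw0 hBw1 a ha F hF xP xW
end

section
/- Let a > 0. If x ∈ ℝ^{n+m} and λ_p, λ_w ∈ ℝ satisfy the first-order conditions 2a M x + B (λ_p, λ_w)^T = 2a c + d and B^T x = 0, then necessarily λ_p = 1 and λ_w = 1. -/
/-!
Sum the block rows of the first-order condition. Every column of each block row of `M` sums
to zero (the covariance blocks of a probability vector are centred), as do `c_p` and `c_w`,
while `ψ_p`, `ψ_w`, `φ_p`, `φ_w` sum to one. Summing the `p`-rows thus leaves `λ_p = 1` and
summing the `w`-rows leaves `λ_w = 1`.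
-/

open Finset Matrix

section BlockSums

variable {ι κ τ : Type*} [Fintype ι] [Fintype τ]

lemma sum_mulVec_comp (A : Matrix κ τ ℝ) (f : ι → κ) (x : τ → ℝ) :
    ∑ i, (A *ᵥ x) (f i) = (fun t ↦ ∑ i, A (f i) t) ⬝ᵥ x := by
  simp only [mulVec, dotProduct, sum_mul]
  exact sum_comm

lemma sum_mulVec_comp_eq_zero (A : Matrix κ τ ℝ) (f : ι → κ) (x : τ → ℝ)
    (hA : ∀ t, ∑ i, A (f i) t = 0) : ∑ i, (A *ᵥ x) (f i) = 0 := by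
  simp [sum_mulVec_comp, hA]

lemma eq_one_of_sum_comp {u b g h : κ → ℝ} (f : ι → κ) (s lam : ℝ)
    (heq : s • u + b = s • g + h) (hu : ∑ i, u (f i) = 0) (hb : ∑ i, b (f i) = lam)
    (hg : ∑ i, g (f i) = 0) (hh : ∑ i, h (f i) = 1) : lam = 1 := by
  have := congrArg (fun v ↦ ∑ i, v (f i)) heq
  simp only [Pi.add_apply, Pi.smul_apply, smul_eq_mul, sum_add_distrib, ← mul_sum, hu, hb, hg, hh,
    mul_zero, zero_add] at this
  exact this

end BlockSums

section Centred

variable {ι κ : Type*} [Fintype ι]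

lemma colSum_diag_sub_outer_eq_zero [DecidableEq ι] {π : ι → ℝ} (hπ : ∑ i, π i = 1) (i' : ι) :
    ∑ i, ((if i = i' then π i else 0) - π i * π i') = 0 := by
  simp [sum_sub_distrib, ← sum_mul, hπ]

lemma colSum_joint_sub_outer_eq_zero {J : ι → κ → ℝ} {π : ι → ℝ} {ρ : κ → ℝ}
    (hπ : ∑ i, π i = 1) (hJ : ∀ j, ∑ i, J i j = ρ j) (j : κ) :
    ∑ i, (J i j - π i * ρ j) = 0 := by
  rw [sum_sub_distrib, hJ, ← sum_mul, hπ, one_mul, sub_self]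

lemma sum_centred_eq_zero {π v : ι → ℝ} {μ : ℝ} (hπ : ∑ i, π i = 1) (hv : ∑ i, v i = μ) :
    ∑ i, (μ * π i - v i) = 0 := by
  rw [sum_sub_distrib, ← mul_sum, hπ, hv, mul_one, sub_self]

end Centred

lemma sum_comm_three {α β γ R : Type*} [Fintype α] [Fintype β] [Fintype γ] [AddCommMonoid R]
    (f : α → β → γ → R) : ∑ j, ∑ i, ∑ k, f i k j = ∑ i, ∑ k, ∑ j, f i k j := by
  rw [sum_comm]
  exact sum_congr rfl fun _ _ ↦ sum_comm

theorem stmt_11_general (n m l : ℕ)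
    (ψ : Fin n → Fin l → Fin m → ℝ)
    (hψ1 : ∑ i, ∑ k, ∑ j, ψ i k j = 1)
    (ψp : Fin n → ℝ) (hψp : ∀ i, ψp i = ∑ k, ∑ j, ψ i k j)
    (ψw : Fin m → ℝ) (hψw : ∀ j, ψw j = ∑ i, ∑ k, ψ i k j)
    (ψpw : Matrix (Fin n) (Fin m) ℝ) (hψpw : ∀ i j, ψpw i j = ∑ k, ψ i k j)
    (y : Fin n → Fin l → ℝ)
    (μy : ℝ) (hμy : μy = ∑ i, ∑ k, ∑ j, ψ i k j * y i k)
    (vp : Fin n → ℝ) (hvp : ∀ i, vp i = ∑ k, ∑ j, ψ i k j * y i k)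
    (vw : Fin m → ℝ) (hvw : ∀ j, vw j = ∑ i, ∑ k, ψ i k j * y i k)
    (cp : Fin n → ℝ) (hcp : ∀ i, cp i = μy * ψp i - vp i)
    (cw : Fin m → ℝ) (hcw : ∀ j, cw j = μy * ψw j - vw j)
    (M : Matrix (Fin n ⊕ Fin m) (Fin n ⊕ Fin m) ℝ)
    (hMpp : ∀ i i', M (Sum.inl i) (Sum.inl i') = (if i = i' then ψp i else 0) - ψp i * ψp i')
    (hMww : ∀ j j', M (Sum.inr j) (Sum.inr j') = (if j = j' then ψw j else 0) - ψw j * ψw j')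
    (hMpw : ∀ i j, M (Sum.inl i) (Sum.inr j) = ψpw i j - ψp i * ψw j)
    (hMwp : ∀ i j, M (Sum.inr j) (Sum.inl i) = ψpw i j - ψp i * ψw j)
    (φ : Fin n → Fin m → ℝ)
    (hφ1 : ∑ i, ∑ j, φ i j = 1)
    (φp : Fin n → ℝ) (hφp : ∀ i, φp i = ∑ j, φ i j)
    (φw : Fin m → ℝ) (hφw : ∀ j, φw j = ∑ i, φ i j)
    (B : Matrix (Fin n ⊕ Fin m) (Fin 2) ℝ)
    (hBp0 : ∀ i, B (Sum.inl i) 0 = φp i) (hBp1 : ∀ i, B (Sum.inl i) 1 = 0)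
    (hBw0 : ∀ j, B (Sum.inr j) 0 = 0) (hBw1 : ∀ j, B (Sum.inr j) 1 = φw j)
    (a : ℝ) :
    ∀ (x : Fin n ⊕ Fin m → ℝ) (lp lw : ℝ),
      (2*a) • M.mulVec x + B.mulVec ![lp, lw]
        = (2*a) • Sum.elim cp cw + Sum.elim ψp ψw →
      B.transpose.mulVec x = 0 →
      lp = 1 ∧ lw = 1 := by
  intro x lp lw heq _
  have hψp1 : ∑ i, ψp i = 1 := by simp_rw [hψp]; exact hψ1
  have hψw1 : ∑ j, ψw j = 1 := by simp_rw [hψw]; rw [sum_comm_three, hψ1]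
  have hφp1 : ∑ i, φp i = 1 := by simp_rw [hφp]; exact hφ1
  have hφw1 : ∑ j, φw j = 1 := by simp_rw [hφw]; rw [sum_comm, hφ1]
  have hvp_sum : ∑ i, vp i = μy := by simp_rw [hvp, hμy]
  have hvw_sum : ∑ j, vw j = μy := by simp_rw [hvw]; rw [sum_comm_three, hμy]
  have hψpw_col : ∀ j, ∑ i, ψpw i j = ψw j := by simp [hψpw, hψw]
  have hψpw_row : ∀ i, ∑ j, ψpwᵀ j i = ψp i := by simp [hψpw, hψp, sum_comm (γ := Fin m)]
  constructor
  · refine eq_one_of_sum_comp Sum.inl (2 * a) lp heq ?_ ?_ ?_ (by simpa using hψp1)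
    · refine sum_mulVec_comp_eq_zero _ _ _ fun t ↦ ?_
      rcases t with i' | j
      · simp_rw [hMpp]; exact colSum_diag_sub_outer_eq_zero hψp1 i'
      · simp_rw [hMpw]; exact colSum_joint_sub_outer_eq_zero hψp1 hψpw_col j
    · simp [sum_mulVec_comp, dotProduct, Fin.sum_univ_two, hBp0, hBp1, hφp1]
    · simpa [hcp] using sum_centred_eq_zero hψp1 hvp_sum
  · refine eq_one_of_sum_comp Sum.inr (2 * a) lw heq ?_ ?_ ?_ (by simpa using hψw1)
    · refine sum_mulVec_comp_eq_zero _ _ _ fun t ↦ ?_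
      rcases t with i | j'
      · simp_rw [hMwp, mul_comm (ψp i)]; exact colSum_joint_sub_outer_eq_zero hψw1 hψpw_row i
      · simp_rw [hMww]; exact colSum_diag_sub_outer_eq_zero hψw1 j'
    · simp [sum_mulVec_comp, dotProduct, Fin.sum_univ_two, hBw0, hBw1, hφw1]
    · simpa [hcw] using sum_centred_eq_zero hψw1 hvw_sum

theorem stmt_11 (n m l : ℕ) (hn : 1 ≤ n) (hm : 1 ≤ m) (hl : 1 ≤ l)
    (p : Fin n → ℝ) (q : Fin l → ℝ) (w : Fin m → ℝ)
    (ψ : Fin n → Fin l → Fin m → ℝ)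
    (hψ0 : ∀ i k j, 0 ≤ ψ i k j)
    (hψ1 : ∑ i, ∑ k, ∑ j, ψ i k j = 1)
    (ψp : Fin n → ℝ) (hψp : ∀ i, ψp i = ∑ k, ∑ j, ψ i k j)
    (ψw : Fin m → ℝ) (hψw : ∀ j, ψw j = ∑ i, ∑ k, ψ i k j)
    (ψpw : Matrix (Fin n) (Fin m) ℝ) (hψpw : ∀ i j, ψpw i j = ∑ k, ψ i k j)
    (r : ℝ) (y : Fin n → Fin l → ℝ) (hy : ∀ i k, y i k = (r - p i) * q k)
    (μy : ℝ) (hμy : μy = ∑ i, ∑ k, ∑ j, ψ i k j * y i k)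
    (vp : Fin n → ℝ) (hvp : ∀ i, vp i = ∑ k, ∑ j, ψ i k j * y i k)
    (vw : Fin m → ℝ) (hvw : ∀ j, vw j = ∑ i, ∑ k, ψ i k j * y i k)
    (cp : Fin n → ℝ) (hcp : ∀ i, cp i = μy * ψp i - vp i)
    (cw : Fin m → ℝ) (hcw : ∀ j, cw j = μy * ψw j - vw j)
    (M : Matrix (Fin n ⊕ Fin m) (Fin n ⊕ Fin m) ℝ)
    (hMpp : ∀ i i', M (Sum.inl i) (Sum.inl i') = (if i = i' then ψp i else 0) - ψp i * ψp i')
    (hMww : ∀ j j', M (Sum.inr j) (Sum.inr j') = (if j = j' then ψw j else 0) - ψw j * ψw j')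
    (hMpw : ∀ i j, M (Sum.inl i) (Sum.inr j) = ψpw i j - ψp i * ψw j)
    (hMwp : ∀ i j, M (Sum.inr j) (Sum.inl i) = ψpw i j - ψp i * ψw j)
    (φ : Fin n → Fin m → ℝ)
    (hφ0 : ∀ i j, 0 ≤ φ i j) (hφ1 : ∑ i, ∑ j, φ i j = 1)
    (φp : Fin n → ℝ) (hφp : ∀ i, φp i = ∑ j, φ i j)
    (φw : Fin m → ℝ) (hφw : ∀ j, φw j = ∑ i, φ i j)
    (B : Matrix (Fin n ⊕ Fin m) (Fin 2) ℝ)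
    (hBp0 : ∀ i, B (Sum.inl i) 0 = φp i) (hBp1 : ∀ i, B (Sum.inl i) 1 = 0)
    (hBw0 : ∀ j, B (Sum.inr j) 0 = 0) (hBw1 : ∀ j, B (Sum.inr j) 1 = φw j)
    (a : ℝ) (ha : 0 < a) :
    ∀ (x : Fin n ⊕ Fin m → ℝ) (lp lw : ℝ),
      (2*a) • M.mulVec x + B.mulVec ![lp, lw]
        = (2*a) • Sum.elim cp cw + Sum.elim ψp ψw →
      B.transpose.mulVec x = 0 →
      lp = 1 ∧ lw = 1 :=
  stmt_11_general n m l ψ hψ1 ψp hψp ψw hψw ψpw hψpw y μy hμy vp hvp vw hvw cp hcp cw hcw M hMpp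
    hMww hMpw hMwp φ hφ1 φp hφp φw hφw B hBp0 hBp1 hBw0 hBw1 a
end

section
/- Let a > 0 and x ∈ ℝ^{n+m}. Then x satisfies the first-order conditions with multipliers λ_p = λ_w = 1, i.e. 2a M x + b = 2a c + d and B^T x = 0, if and only if x satisfies the reduced system M̂ x = ĉ + (1/(2a))(d̂ − b̂) and B^T x = 0, where M̂, ĉ, d̂, b̂ are obtained from M, c, d, b by deleting the n-th and (n+m)-th rows/entries. -/
/-!
Write `F = 2a M x + b - 2a c - d`. Each of `M_pp, M_pw, M_wp, M_ww` is a covariance block of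
one-hot indicator vectors, whose entries in a block sum to the constant `1`; hence every block of
rows of `M` sums to zero. Likewise `c` sums to zero over each block (`∑ v_p = μ_y = ∑ v_w`), and
`b` and `d` both sum to `1` over each block. So the entries of `F` in the price block, and in the
weather block, sum to zero, and the last equation of each block follows from the others.
-/

open Finset Matrix

theorem Fin.forall_eq_zero_iff_forall_castSucc_of_sum_eq_zero {G : Type*} [AddCommGroup G]
    {n : ℕ} {f : Fin (n + 1) → G} (hf : ∑ i, f i = 0) :
    (∀ i, f i = 0) ↔ ∀ i : Fin n, f i.castSucc = 0 := by
  refine ⟨fun h i => h _, fun h i => ?_⟩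
  induction i using Fin.lastCases with
  | cast i => exact h i
  | last => simpa [Fin.sum_univ_castSucc, h] using hf

theorem Fin.forall_mul_add_eq_iff_forall_castSucc {K : Type*} [Field K] {n : ℕ}
    {v c d b : Fin (n + 1) → K} {a : K} (ha : a ≠ 0) (hv : ∑ i, v i = 0) (hc : ∑ i, c i = 0)
    (hbd : ∑ i, b i = ∑ i, d i) :
    (∀ i, a * v i + b i = a * c i + d i) ↔
      ∀ i : Fin n, v i.castSucc = c i.castSucc + a⁻¹ * (d i.castSucc - b i.castSucc) := by
  have hsum : ∑ i, (a * v i + b i - (a * c i + d i)) = 0 := by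
    simp only [sum_sub_distrib, sum_add_distrib, ← mul_sum, hv, hc, hbd]
    ring
  simp only [← sub_eq_zero (a := a * v _ + b _),
    Fin.forall_eq_zero_iff_forall_castSucc_of_sum_eq_zero hsum]
  refine forall_congr' fun i => ?_
  rw [sub_eq_zero]
  field_simp
  constructor <;> intro h <;> linear_combination h

theorem Matrix.sum_mulVec_comp_eq_zero {ι ι' κ R : Type*} [Fintype ι'] [Fintype κ]
    [NonUnitalNonAssocSemiring R] (M : Matrix ι κ R) (e : ι' → ι)
    (hM : ∀ t, ∑ i, M (e i) t = 0) (x : κ → R) : ∑ i, (M *ᵥ x) (e i) = 0 := by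
  simp only [mulVec, dotProduct]
  rw [sum_comm]
  simp only [← sum_mul, hM, zero_mul, sum_const_zero]

theorem sum_ite_eq_sub_mul_eq_zero {ι R : Type*} [Fintype ι] [DecidableEq ι] [Ring R]
    {v : ι → R} (hv : ∑ i, v i = 1) (j : ι) :
    ∑ i, ((if i = j then v i else 0) - v i * v j) = 0 := by
  simp [sum_sub_distrib, ← sum_mul, hv]

theorem sum_sub_mul_eq_zero {ι R : Type*} [Fintype ι] [Ring R] {f u : ι → R} {s : R}
    (hf : ∑ i, f i = s) (hu : ∑ i, u i = 1) : ∑ i, (f i - u i * s) = 0 := by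
  rw [sum_sub_distrib, ← sum_mul, hf, hu, one_mul, sub_self]

theorem Finset.sum_comm_rotate {α β γ M : Type*} [Fintype α] [Fintype β] [Fintype γ]
    [AddCommMonoid M] (f : α → β → γ → M) :
    ∑ c, ∑ a, ∑ b, f a b c = ∑ a, ∑ b, ∑ c, f a b c :=
  sum_comm.trans (sum_congr rfl fun _ _ => sum_comm)

theorem stmt_12_general (n m l : ℕ)
    (ψ : Fin (n+1) → Fin l → Fin (m+1) → ℝ)
    (hψ1 : ∑ i, ∑ k, ∑ j, ψ i k j = 1)
    (ψp : Fin (n+1) → ℝ) (hψp : ∀ i, ψp i = ∑ k, ∑ j, ψ i k j)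
    (ψw : Fin (m+1) → ℝ) (hψw : ∀ j, ψw j = ∑ i, ∑ k, ψ i k j)
    (ψpw : Matrix (Fin (n+1)) (Fin (m+1)) ℝ) (hψpw : ∀ i j, ψpw i j = ∑ k, ψ i k j)
    (y : Fin (n+1) → Fin l → ℝ)
    (μy : ℝ) (hμy : μy = ∑ i, ∑ k, ∑ j, ψ i k j * y i k)
    (vp : Fin (n+1) → ℝ) (hvp : ∀ i, vp i = ∑ k, ∑ j, ψ i k j * y i k)
    (vw : Fin (m+1) → ℝ) (hvw : ∀ j, vw j = ∑ i, ∑ k, ψ i k j * y i k)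
    (cp : Fin (n+1) → ℝ) (hcp : ∀ i, cp i = μy * ψp i - vp i)
    (cw : Fin (m+1) → ℝ) (hcw : ∀ j, cw j = μy * ψw j - vw j)
    (M : Matrix (Fin (n+1) ⊕ Fin (m+1)) (Fin (n+1) ⊕ Fin (m+1)) ℝ)
    (hMpp : ∀ i i', M (Sum.inl i) (Sum.inl i') = (if i = i' then ψp i else 0) - ψp i * ψp i')
    (hMww : ∀ j j', M (Sum.inr j) (Sum.inr j') = (if j = j' then ψw j else 0) - ψw j * ψw j')
    (hMpw : ∀ i j, M (Sum.inl i) (Sum.inr j) = ψpw i j - ψp i * ψw j)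
    (hMwp : ∀ i j, M (Sum.inr j) (Sum.inl i) = ψpw i j - ψp i * ψw j)
    (φ : Fin (n+1) → Fin (m+1) → ℝ)
    (hφ1 : ∑ i, ∑ j, φ i j = 1)
    (φp : Fin (n+1) → ℝ) (hφp : ∀ i, φp i = ∑ j, φ i j)
    (φw : Fin (m+1) → ℝ) (hφw : ∀ j, φw j = ∑ i, φ i j)
    (B : Matrix (Fin (n+1) ⊕ Fin (m+1)) (Fin 2) ℝ)
    (Mhat : Matrix (Fin n ⊕ Fin m) (Fin (n+1) ⊕ Fin (m+1)) ℝ)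
    (hMhatp : ∀ (i : Fin n) t, Mhat (Sum.inl i) t = M (Sum.inl i.castSucc) t)
    (hMhatw : ∀ (j : Fin m) t, Mhat (Sum.inr j) t = M (Sum.inr j.castSucc) t)
    (chat : Fin n ⊕ Fin m → ℝ)
    (hchatp : ∀ i : Fin n, chat (Sum.inl i) = cp i.castSucc)
    (hchatw : ∀ j : Fin m, chat (Sum.inr j) = cw j.castSucc)
    (dhat : Fin n ⊕ Fin m → ℝ)
    (hdhatp : ∀ i : Fin n, dhat (Sum.inl i) = ψp i.castSucc)
    (hdhatw : ∀ j : Fin m, dhat (Sum.inr j) = ψw j.castSucc)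
    (bhat : Fin n ⊕ Fin m → ℝ)
    (hbhatp : ∀ i : Fin n, bhat (Sum.inl i) = φp i.castSucc)
    (hbhatw : ∀ j : Fin m, bhat (Sum.inr j) = φw j.castSucc)
    (a : ℝ) (ha : 0 < a) :
    ∀ x : Fin (n+1) ⊕ Fin (m+1) → ℝ,
      ((2*a) • M.mulVec x + Sum.elim φp φw
          = (2*a) • Sum.elim cp cw + Sum.elim ψp ψw ∧
        B.transpose.mulVec x = 0)
      ↔ (Mhat.mulVec x = (fun s => chat s + (1/(2*a)) * (dhat s - bhat s)) ∧
          B.transpose.mulVec x = 0) := by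
  intro x
  have hψp1 : ∑ i, ψp i = 1 := by simpa only [hψp] using hψ1
  have hψw1 : ∑ j, ψw j = 1 := by simp only [hψw]; exact (sum_comm_rotate ψ).trans hψ1
  have hφp1 : ∑ i, φp i = 1 := by simpa only [hφp] using hφ1
  have hφw1 : ∑ j, φw j = 1 := by simpa only [hφw, sum_comm (γ := Fin (m+1))] using hφ1
  have hcp0 : ∑ i, cp i = 0 := by simp [hcp, sum_sub_distrib, ← mul_sum, hψp1, hvp, hμy]
  have hcw0 : ∑ j, cw j = 0 := by
    simp only [hcw, hvw, sum_sub_distrib, ← mul_sum, hψw1]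
    rw [sum_comm_rotate, hμy, mul_one, sub_self]
  have hMp : ∀ t, ∑ i, M (Sum.inl i) t = 0 := by
    rintro (i' | j)
    · simpa only [hMpp] using sum_ite_eq_sub_mul_eq_zero hψp1 i'
    · simpa only [hMpw] using sum_sub_mul_eq_zero (by simp only [hψpw, hψw]) hψp1
  have hMw : ∀ t, ∑ j, M (Sum.inr j) t = 0 := by
    rintro (i | j')
    · simpa only [hMwp, mul_comm (ψp i)] using
        sum_sub_mul_eq_zero (by simp only [hψpw, hψp, sum_comm (γ := Fin (m+1))]) hψw1
    · simpa only [hMww] using sum_ite_eq_sub_mul_eq_zero hψw1 j'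
  have hMhatx_p : ∀ i, (Mhat *ᵥ x) (Sum.inl i) = (M *ᵥ x) (Sum.inl i.castSucc) :=
    fun i => congrArg (· ⬝ᵥ x) (funext (hMhatp i))
  have hMhatx_w : ∀ j, (Mhat *ᵥ x) (Sum.inr j) = (M *ᵥ x) (Sum.inr j.castSucc) :=
    fun j => congrArg (· ⬝ᵥ x) (funext (hMhatw j))
  refine and_congr_left fun _ => ?_
  simp only [funext_iff, Sum.forall, Pi.add_apply, Pi.smul_apply, smul_eq_mul, Sum.elim_inl,
    Sum.elim_inr, hMhatx_p, hMhatx_w, hchatp, hchatw, hdhatp, hdhatw, hbhatp, hbhatw, one_div]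
  have h2a : 2 * a ≠ 0 := by positivity
  rw [Fin.forall_mul_add_eq_iff_forall_castSucc h2a (sum_mulVec_comp_eq_zero M _ hMp x) hcp0
      (hφp1.trans hψp1.symm),
    Fin.forall_mul_add_eq_iff_forall_castSucc h2a (sum_mulVec_comp_eq_zero M _ hMw x) hcw0
      (hφw1.trans hψw1.symm)]

theorem stmt_12 (n m l : ℕ) (hl : 1 ≤ l)
    (p : Fin (n+1) → ℝ) (q : Fin l → ℝ) (w : Fin (m+1) → ℝ)
    (ψ : Fin (n+1) → Fin l → Fin (m+1) → ℝ)
    (hψ0 : ∀ i k j, 0 ≤ ψ i k j)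
    (hψ1 : ∑ i, ∑ k, ∑ j, ψ i k j = 1)
    (ψp : Fin (n+1) → ℝ) (hψp : ∀ i, ψp i = ∑ k, ∑ j, ψ i k j)
    (ψw : Fin (m+1) → ℝ) (hψw : ∀ j, ψw j = ∑ i, ∑ k, ψ i k j)
    (ψpw : Matrix (Fin (n+1)) (Fin (m+1)) ℝ) (hψpw : ∀ i j, ψpw i j = ∑ k, ψ i k j)
    (r : ℝ) (y : Fin (n+1) → Fin l → ℝ) (hy : ∀ i k, y i k = (r - p i) * q k)
    (μy : ℝ) (hμy : μy = ∑ i, ∑ k, ∑ j, ψ i k j * y i k)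
    (vp : Fin (n+1) → ℝ) (hvp : ∀ i, vp i = ∑ k, ∑ j, ψ i k j * y i k)
    (vw : Fin (m+1) → ℝ) (hvw : ∀ j, vw j = ∑ i, ∑ k, ψ i k j * y i k)
    (cp : Fin (n+1) → ℝ) (hcp : ∀ i, cp i = μy * ψp i - vp i)
    (cw : Fin (m+1) → ℝ) (hcw : ∀ j, cw j = μy * ψw j - vw j)
    (M : Matrix (Fin (n+1) ⊕ Fin (m+1)) (Fin (n+1) ⊕ Fin (m+1)) ℝ)
    (hMpp : ∀ i i', M (Sum.inl i) (Sum.inl i') = (if i = i' then ψp i else 0) - ψp i * ψp i')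
    (hMww : ∀ j j', M (Sum.inr j) (Sum.inr j') = (if j = j' then ψw j else 0) - ψw j * ψw j')
    (hMpw : ∀ i j, M (Sum.inl i) (Sum.inr j) = ψpw i j - ψp i * ψw j)
    (hMwp : ∀ i j, M (Sum.inr j) (Sum.inl i) = ψpw i j - ψp i * ψw j)
    (φ : Fin (n+1) → Fin (m+1) → ℝ)
    (hφ0 : ∀ i j, 0 ≤ φ i j) (hφ1 : ∑ i, ∑ j, φ i j = 1)
    (φp : Fin (n+1) → ℝ) (hφp : ∀ i, φp i = ∑ j, φ i j)
    (φw : Fin (m+1) → ℝ) (hφw : ∀ j, φw j = ∑ i, φ i j)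
    (B : Matrix (Fin (n+1) ⊕ Fin (m+1)) (Fin 2) ℝ)
    (hBp0 : ∀ i, B (Sum.inl i) 0 = φp i) (hBp1 : ∀ i, B (Sum.inl i) 1 = 0)
    (hBw0 : ∀ j, B (Sum.inr j) 0 = 0) (hBw1 : ∀ j, B (Sum.inr j) 1 = φw j)
    (Mhat : Matrix (Fin n ⊕ Fin m) (Fin (n+1) ⊕ Fin (m+1)) ℝ)
    (hMhatp : ∀ (i : Fin n) t, Mhat (Sum.inl i) t = M (Sum.inl i.castSucc) t)
    (hMhatw : ∀ (j : Fin m) t, Mhat (Sum.inr j) t = M (Sum.inr j.castSucc) t)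
    (chat : Fin n ⊕ Fin m → ℝ)
    (hchatp : ∀ i : Fin n, chat (Sum.inl i) = cp i.castSucc)
    (hchatw : ∀ j : Fin m, chat (Sum.inr j) = cw j.castSucc)
    (dhat : Fin n ⊕ Fin m → ℝ)
    (hdhatp : ∀ i : Fin n, dhat (Sum.inl i) = ψp i.castSucc)
    (hdhatw : ∀ j : Fin m, dhat (Sum.inr j) = ψw j.castSucc)
    (bhat : Fin n ⊕ Fin m → ℝ)
    (hbhatp : ∀ i : Fin n, bhat (Sum.inl i) = φp i.castSucc)
    (hbhatw : ∀ j : Fin m, bhat (Sum.inr j) = φw j.castSucc)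
    (a : ℝ) (ha : 0 < a) :
    ∀ x : Fin (n+1) ⊕ Fin (m+1) → ℝ,
      ((2*a) • M.mulVec x + Sum.elim φp φw
          = (2*a) • Sum.elim cp cw + Sum.elim ψp ψw ∧
        B.transpose.mulVec x = 0)
      ↔ (Mhat.mulVec x = (fun s => chat s + (1/(2*a)) * (dhat s - bhat s)) ∧
          B.transpose.mulVec x = 0) :=
  stmt_12_general n m l ψ hψ1 ψp hψp ψw hψw ψpw hψpw y μy hμy vp hvp vw hvw cp hcp cw hcw M hMpp
    hMww hMpw hMwp φ hφ1 φp hφp φw hφw B Mhat hMhatp hMhatw chat hchatp hchatw dhat hdhatp hdhatw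
    bhat hbhatp hbhatw a ha
end

section
/- Let a > 0. Assume the (n+m)×(n+m) matrix K obtained by stacking M̂ on top of B^T is invertible. Then x^a = K^{-1} · (ĉ + (1/(2a))(d̂ − b̂), 0, 0) is the unique optimal solution of the hedging problem: its components (x_P, x_W) satisfy φ_p^T x_P = 0 and φ_w^T x_W = 0, they maximize F_a over all pairs satisfying those constraints, and any other feasible maximizer of F_a equals x^a. -/
open Finset Matrix

/-!
Write `X_h = h_P(P) + h_W(W)` for the payoff of positions `h = (h_P, h_W)` and `1ₛ` for the
indicators of the events `{P = p_i}` and `{W = w_j}`. Then `M` is the covariance matrix of the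
`1ₛ`, `Cov(Y, X_h) = ∑ₛ hₛ Cov(Y, 1ₛ)` and `Cov(y, 1ₛ) = -cₛ`. If `x⁰` satisfies the first-order
condition `2a Cov(y + X_{x⁰}, 1ₛ) = dₛ - bₛ` for every `s`, expanding the variance gives
`F_a(x) = F_a(x⁰) + b ⬝ (x - x⁰) - a Var[X_{x - x⁰}]`.
The first `n + m` rows of `K x^a = (ĉ + (d̂ - b̂)/(2a), 0, 0)` are this condition with the two
deleted coordinates missing; these follow because both sides sum to zero over each block. The
last two rows say that `x^a` is feasible. Hence `x^a` is optimal, and a feasible maximiser `x`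
has `Var[X_{x - x^a}] = 0`, so `X_{x - x^a}` is uncorrelated with every `1ₛ`, i.e.
`M x = M x^a`; then `K x = K x^a` and `x = x^a`.
-/

namespace MeanVarianceHedge

section

variable {α κ β : Type*}

def hedge (x : α ⊕ β → ℝ) : α → κ → β → ℝ := fun i _ j => x (.inl i) + x (.inr j)

def profit (y : α → κ → ℝ) : α → κ → β → ℝ := fun i k _ => y i k

def hedged (y : α → κ → ℝ) (x : α ⊕ β → ℝ) : α → κ → β → ℝ :=
  fun i k j => y i k + x (.inl i) + x (.inr j)

theorem hedged_eq_profit_add_hedge (y : α → κ → ℝ) (x : α ⊕ β → ℝ) :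
    hedged y x = profit y + hedge x := by
  funext i k j
  simp only [hedged, profit, hedge, Pi.add_apply]
  ring

theorem hedged_add_hedge (y : α → κ → ℝ) (x h : α ⊕ β → ℝ) :
    hedged y x + hedge h = hedged y (x + h) := by
  funext i k j
  simp only [hedged, hedge, Pi.add_apply]
  ring

variable [Fintype α] [Fintype κ] [Fintype β] (ψ : α → κ → β → ℝ)

def mean (Y : α → κ → β → ℝ) : ℝ := ∑ i, ∑ k, ∑ j, ψ i k j * Y i k j

def variance (Y : α → κ → β → ℝ) : ℝ :=
  ∑ i, ∑ k, ∑ j, ψ i k j * (Y i k j - mean ψ Y) ^ 2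

def covariance (Y Z : α → κ → β → ℝ) : ℝ :=
  ∑ i, ∑ k, ∑ j, ψ i k j * ((Y i k j - mean ψ Y) * (Z i k j - mean ψ Z))

def meanVariance (a : ℝ) (Y : α → κ → β → ℝ) : ℝ := mean ψ Y - a * variance ψ Y

/-- The covariances of `Y` with the indicators of `{P = i}` and `{W = j}`, once `ψ` has mass one. -/
def indicatorCov (Y : α → κ → β → ℝ) : α ⊕ β → ℝ :=
  Sum.elim (fun i => ∑ k, ∑ j, ψ i k j * (Y i k j - mean ψ Y))
    (fun j => ∑ i, ∑ k, ψ i k j * (Y i k j - mean ψ Y))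

def marginalP : α → ℝ := fun i => ∑ k, ∑ j, ψ i k j

def marginalW : β → ℝ := fun j => ∑ i, ∑ k, ψ i k j

def marginal : α ⊕ β → ℝ := Sum.elim (marginalP ψ) (marginalW ψ)

def marginalPW : Matrix α β ℝ := of fun i j => ∑ k, ψ i k j

/-- The paper's `M`: the covariance matrix of the indicators of `{P = i}` and `{W = j}`. -/
def indicatorCovMatrix [DecidableEq α] [DecidableEq β] : Matrix (α ⊕ β) (α ⊕ β) ℝ :=
  fromBlocks (diagonal (marginalP ψ) - vecMulVec (marginalP ψ) (marginalP ψ))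
    (marginalPW ψ - vecMulVec (marginalP ψ) (marginalW ψ))
    ((marginalPW ψ)ᵀ - vecMulVec (marginalW ψ) (marginalP ψ))
    (diagonal (marginalW ψ) - vecMulVec (marginalW ψ) (marginalW ψ))

variable {ψ}

theorem sum_sum_sum_rotate {M : Type*} [AddCommMonoid M] (f : α → κ → β → M) :
    ∑ j, ∑ i, ∑ k, f i k j = ∑ i, ∑ k, ∑ j, f i k j := by
  rw [sum_comm]
  exact sum_congr rfl fun i _ => sum_comm

theorem mean_add (Y Z : α → κ → β → ℝ) : mean ψ (Y + Z) = mean ψ Y + mean ψ Z := by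
  simp only [mean, Pi.add_apply, mul_add, sum_add_distrib]

theorem variance_add (Y Z : α → κ → β → ℝ) :
    variance ψ (Y + Z) = variance ψ Y + 2 * covariance ψ Y Z + variance ψ Z := by
  simp only [variance, covariance, mean_add, Pi.add_apply, mul_sum, ← sum_add_distrib]
  exact sum_congr rfl fun i _ => sum_congr rfl fun k _ => sum_congr rfl fun j _ => by ring

theorem meanVariance_add (a : ℝ) (Y Z : α → κ → β → ℝ) :
    meanVariance ψ a (Y + Z) =
      meanVariance ψ a Y + (mean ψ Z - 2 * a * covariance ψ Y Z) - a * variance ψ Z := by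
  rw [meanVariance, meanVariance, mean_add, variance_add]
  ring

theorem variance_nonneg (hψ0 : ∀ i k j, 0 ≤ ψ i k j) (Y : α → κ → β → ℝ) :
    0 ≤ variance ψ Y :=
  sum_nonneg fun i _ => sum_nonneg fun k _ => sum_nonneg fun j _ =>
    mul_nonneg (hψ0 i k j) (sq_nonneg _)

theorem sum_mul_sub_mean (hψ1 : ∑ i, ∑ k, ∑ j, ψ i k j = 1) (Y : α → κ → β → ℝ) :
    ∑ i, ∑ k, ∑ j, ψ i k j * (Y i k j - mean ψ Y) = 0 := by
  simp only [mul_sub, sum_sub_distrib, ← sum_mul, hψ1, mean]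
  ring

theorem covariance_eq (hψ1 : ∑ i, ∑ k, ∑ j, ψ i k j = 1) (Y Z : α → κ → β → ℝ) :
    covariance ψ Y Z = ∑ i, ∑ k, ∑ j, ψ i k j * (Y i k j - mean ψ Y) * Z i k j := by
  have hsplit : ∀ i k j, ψ i k j * ((Y i k j - mean ψ Y) * (Z i k j - mean ψ Z)) =
      ψ i k j * (Y i k j - mean ψ Y) * Z i k j -
        ψ i k j * (Y i k j - mean ψ Y) * mean ψ Z := fun i k j => by ring
  simp only [covariance, hsplit, sum_sub_distrib, ← sum_mul, sum_mul_sub_mean hψ1, zero_mul,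
    sub_zero]

theorem sum_mul_hedge (f : α → κ → β → ℝ) (x : α ⊕ β → ℝ) :
    ∑ i, ∑ k, ∑ j, f i k j * hedge x i k j =
      Sum.elim (fun i => ∑ k, ∑ j, f i k j) (fun j => ∑ i, ∑ k, f i k j) ⬝ᵥ x := by
  simp only [hedge, mul_add, sum_add_distrib, dotProduct, Fintype.sum_sum_type, Sum.elim_inl,
    Sum.elim_inr, sum_mul]
  congr 1
  exact (sum_sum_sum_rotate _).symm

theorem mean_hedge (x : α ⊕ β → ℝ) : mean ψ (hedge x) = marginal ψ ⬝ᵥ x :=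
  sum_mul_hedge ψ x

theorem covariance_hedge (hψ1 : ∑ i, ∑ k, ∑ j, ψ i k j = 1) (Y : α → κ → β → ℝ)
    (x : α ⊕ β → ℝ) : covariance ψ Y (hedge x) = indicatorCov ψ Y ⬝ᵥ x := by
  rw [covariance_eq hψ1]
  exact sum_mul_hedge _ x

theorem indicatorCov_add (Y Z : α → κ → β → ℝ) :
    indicatorCov ψ (Y + Z) = indicatorCov ψ Y + indicatorCov ψ Z := by
  ext (i | j) <;>
  simp only [indicatorCov, mean_add, Pi.add_apply, Sum.elim_inl, Sum.elim_inr,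
    ← sum_add_distrib, ← mul_add, add_sub_add_comm]

theorem indicatorCov_hedge [DecidableEq α] [DecidableEq β] (x : α ⊕ β → ℝ) :
    indicatorCov (κ := κ) ψ (hedge x) = indicatorCovMatrix ψ *ᵥ x := by
  ext (i | j)
  · have hswap : ∑ k, ∑ j, ψ i k j * x (.inr j) = ∑ j, (∑ k, ψ i k j) * x (.inr j) := by
      rw [sum_comm]
      simp only [sum_mul]
    simp [indicatorCov, indicatorCovMatrix, mean_hedge, hedge, marginal, marginalP, marginalW,
      marginalPW, mulVec, dotProduct, mul_add, mul_sub, sum_add_distrib, sum_sub_distrib,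
      ← sum_mul, diagonal_apply, vecMulVec_apply, sub_mul, mul_assoc, ← mul_sum, hswap]
    ring
  · simp [indicatorCov, indicatorCovMatrix, mean_hedge, hedge, marginal, marginalP, marginalW,
      marginalPW, mulVec, dotProduct, mul_add, mul_sub, sum_add_distrib, sum_sub_distrib,
      ← sum_mul, diagonal_apply, vecMulVec_apply, sub_mul, mul_assoc, ← mul_sum]
    ring

theorem indicatorCov_profit (y : α → κ → ℝ) :
    indicatorCov ψ (profit y) =
      Sum.elim (fun i => ∑ k, ∑ j, ψ i k j * y i k - mean ψ (profit y) * marginalP ψ i)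
        (fun j => ∑ i, ∑ k, ψ i k j * y i k - mean ψ (profit y) * marginalW ψ j) := by
  ext (i | j) <;>
  simp only [indicatorCov, profit, marginalP, marginalW, Sum.elim_inl, Sum.elim_inr, mul_sub,
    sum_sub_distrib, ← sum_mul, ← mul_sum, mul_comm]

theorem sum_indicatorCov_inl (hψ1 : ∑ i, ∑ k, ∑ j, ψ i k j = 1) (Y : α → κ → β → ℝ) :
    ∑ i, indicatorCov ψ Y (.inl i) = 0 :=
  sum_mul_sub_mean hψ1 Y

theorem sum_indicatorCov_inr (hψ1 : ∑ i, ∑ k, ∑ j, ψ i k j = 1) (Y : α → κ → β → ℝ) :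
    ∑ j, indicatorCov ψ Y (.inr j) = 0 :=
  (sum_sum_sum_rotate _).trans (sum_mul_sub_mean hψ1 Y)

theorem indicatorCov_eq_zero_of_variance_eq_zero (hψ0 : ∀ i k j, 0 ≤ ψ i k j)
    {Y : α → κ → β → ℝ} (hY : variance ψ Y = 0) : indicatorCov ψ Y = 0 := by
  rw [variance] at hY
  simp only [← Fintype.sum_prod_type'] at hY
  have hzero := (Fintype.sum_eq_zero_iff_of_nonneg fun ω =>
    mul_nonneg (hψ0 ω.1 ω.2.1 ω.2.2) (sq_nonneg _)).1 hY
  have hterm : ∀ i k j, ψ i k j * (Y i k j - mean ψ Y) = 0 := by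
    intro i k j
    have hsq : (ψ i k j * (Y i k j - mean ψ Y)) ^ 2 =
        ψ i k j * (ψ i k j * (Y i k j - mean ψ Y) ^ 2) := by ring
    refine pow_eq_zero_iff two_ne_zero |>.1 ?_
    rw [hsq, congrFun hzero (i, k, j), Pi.zero_apply, mul_zero]
  ext (i | j) <;> simp [indicatorCov, hterm]

-- `hstat` is the first-order condition for maximising `meanVariance ψ a (hedged y ·)` under the
-- two constraints, with both Lagrange multipliers equal to `1`.
variable (hψ1 : ∑ i, ∑ k, ∑ j, ψ i k j = 1) {a : ℝ} {y : α → κ → ℝ} {x₀ b : α ⊕ β → ℝ}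
  (hstat : indicatorCov ψ (hedged y x₀) = (2 * a)⁻¹ • (marginal ψ - b))
include hψ1 hstat

theorem meanVariance_hedged_eq (ha : a ≠ 0) (x : α ⊕ β → ℝ) :
    meanVariance ψ a (hedged y x) =
      meanVariance ψ a (hedged y x₀) + b ⬝ᵥ (x - x₀) - a * variance ψ (hedge (x - x₀)) := by
  rw [← add_sub_cancel x₀ x, ← hedged_add_hedge, meanVariance_add, covariance_hedge hψ1, hstat,
    mean_hedge, smul_dotProduct, sub_dotProduct, smul_eq_mul, add_sub_cancel_left]
  field_simp
  ring

theorem meanVariance_hedged_le (hψ0 : ∀ i k j, 0 ≤ ψ i k j) (ha : 0 < a) {x : α ⊕ β → ℝ}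
    (hb : b ⬝ᵥ x = b ⬝ᵥ x₀) :
    meanVariance ψ a (hedged y x) ≤ meanVariance ψ a (hedged y x₀) := by
  rw [meanVariance_hedged_eq hψ1 hstat ha.ne', dotProduct_sub, hb, sub_self, add_zero,
    sub_le_self_iff]
  exact mul_nonneg ha.le (variance_nonneg hψ0 _)

theorem indicatorCovMatrix_mulVec_eq [DecidableEq α] [DecidableEq β]
    (hψ0 : ∀ i k j, 0 ≤ ψ i k j) (ha : 0 < a) {x : α ⊕ β → ℝ} (hb : b ⬝ᵥ x = b ⬝ᵥ x₀)
    (hle : meanVariance ψ a (hedged y x₀) ≤ meanVariance ψ a (hedged y x)) :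
    indicatorCovMatrix ψ *ᵥ x = indicatorCovMatrix ψ *ᵥ x₀ := by
  rw [meanVariance_hedged_eq hψ1 hstat ha.ne' x, dotProduct_sub, hb, sub_self, add_zero] at hle
  have hvar : variance ψ (hedge (κ := κ) (x - x₀)) = 0 :=
    le_antisymm (by nlinarith) (variance_nonneg hψ0 _)
  rw [← sub_eq_zero, ← mulVec_sub, ← indicatorCov_hedge]
  exact indicatorCov_eq_zero_of_variance_eq_zero hψ0 hvar

end

section

variable {n m : ℕ}

/-- Deletes the `n`-th and `(n+m)`-th coordinates, as in `M̂`, `ĉ`, `d̂`, `b̂`. -/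
def dropLast {X : Type*} (v : Fin (n + 1) ⊕ Fin (m + 1) → X) : Fin n ⊕ Fin m → X :=
  v ∘ Sum.map Fin.castSucc Fin.castSucc

theorem _root_.Fin.eq_of_castSucc_eq_of_sum_eq {G : Type*} [AddCommGroup G]
    {f g : Fin (n + 1) → G} (h : ∀ i : Fin n, f i.castSucc = g i.castSucc)
    (hsum : ∑ i, f i = ∑ i, g i) : f = g := by
  rw [Fin.sum_univ_castSucc, Fin.sum_univ_castSucc, sum_congr rfl fun i _ => h i] at hsum
  funext i
  induction i using Fin.lastCases with
  | last => exact add_left_cancel hsum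
  | cast i => exact h i

theorem eq_of_dropLast_eq_of_sum_eq {G : Type*} [AddCommGroup G]
    {u v : Fin (n + 1) ⊕ Fin (m + 1) → G} (h : dropLast u = dropLast v)
    (hP : ∑ i, u (.inl i) = ∑ i, v (.inl i)) (hW : ∑ j, u (.inr j) = ∑ j, v (.inr j)) :
    u = v := by
  have hPe := Fin.eq_of_castSucc_eq_of_sum_eq (fun i => congrFun h (.inl i)) hP
  have hWe := Fin.eq_of_castSucc_eq_of_sum_eq (fun j => congrFun h (.inr j)) hW
  ext (i | j)
  · exact congrFun hPe i
  · exact congrFun hWe j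

theorem mulVec_eq_sumElim_dropLast {R : Type*} [NonUnitalNonAssocSemiring R]
    {M : Matrix (Fin (n + 1) ⊕ Fin (m + 1)) (Fin (n + 1) ⊕ Fin (m + 1)) R}
    {Mhat : Matrix (Fin n ⊕ Fin m) (Fin (n + 1) ⊕ Fin (m + 1)) R}
    {B : Matrix (Fin (n + 1) ⊕ Fin (m + 1)) (Fin 2) R}
    {K : Matrix ((Fin n ⊕ Fin m) ⊕ Fin 2) (Fin (n + 1) ⊕ Fin (m + 1)) R}
    {bP : Fin (n + 1) → R} {bW : Fin (m + 1) → R}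
    (hMhatp : ∀ (i : Fin n) t, Mhat (.inl i) t = M (.inl i.castSucc) t)
    (hMhatw : ∀ (j : Fin m) t, Mhat (.inr j) t = M (.inr j.castSucc) t)
    (hKM : ∀ s t, K (.inl s) t = Mhat s t) (hKB : ∀ u t, K (.inr u) t = B t u)
    (hBp0 : ∀ i, B (.inl i) 0 = bP i) (hBp1 : ∀ i, B (.inl i) 1 = 0)
    (hBw0 : ∀ j, B (.inr j) 0 = 0) (hBw1 : ∀ j, B (.inr j) 1 = bW j)
    (v : Fin (n + 1) ⊕ Fin (m + 1) → R) :
    K *ᵥ v = Sum.elim (dropLast (M *ᵥ v)) ![bP ⬝ᵥ (v ∘ .inl), bW ⬝ᵥ (v ∘ .inr)] := by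
  ext ((i | j) | u)
  · simp [mulVec, dotProduct, dropLast, hKM, hMhatp]
  · simp [mulVec, dotProduct, dropLast, hKM, hMhatw]
  · fin_cases u <;>
    simp [mulVec, dotProduct, Fintype.sum_sum_type, hKB, hBp0, hBp1, hBw0, hBw1]

variable {κ : Type*} [Fintype κ] {ψ : Fin (n + 1) → κ → Fin (m + 1) → ℝ}

theorem indicatorCov_hedged_eq_of_dropLast (hψ1 : ∑ i, ∑ k, ∑ j, ψ i k j = 1)
    {y : Fin (n + 1) → κ → ℝ} {x b : Fin (n + 1) ⊕ Fin (m + 1) → ℝ} {t : ℝ}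
    (hbP : ∑ i, b (.inl i) = 1) (hbW : ∑ j, b (.inr j) = 1)
    (hx : dropLast (indicatorCovMatrix ψ *ᵥ x) =
      dropLast (-indicatorCov ψ (profit y) + t • (marginal ψ - b))) :
    indicatorCov ψ (hedged y x) = t • (marginal ψ - b) := by
  apply eq_of_dropLast_eq_of_sum_eq
  · rw [hedged_eq_profit_add_hedge, indicatorCov_add, indicatorCov_hedge]
    ext s
    have hs := congrFun hx s
    simp only [dropLast, Function.comp_apply, Pi.add_apply, Pi.neg_apply] at hs ⊢
    rw [hs]
    ring
  · simp [sum_indicatorCov_inl hψ1, marginal, marginalP, ← mul_sum, sum_sub_distrib, hψ1, hbP]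
  · simp [sum_indicatorCov_inr hψ1, marginal, marginalW, ← mul_sum, sum_sub_distrib,
      sum_sum_sum_rotate, hψ1, hbW]

end

end MeanVarianceHedge

open MeanVarianceHedge

theorem stmt_13_general (n m l : ℕ)
    (ψ : Fin (n+1) → Fin l → Fin (m+1) → ℝ)
    (hψ0 : ∀ i k j, 0 ≤ ψ i k j)
    (hψ1 : ∑ i, ∑ k, ∑ j, ψ i k j = 1)
    (ψp : Fin (n+1) → ℝ) (hψp : ∀ i, ψp i = ∑ k, ∑ j, ψ i k j)
    (ψw : Fin (m+1) → ℝ) (hψw : ∀ j, ψw j = ∑ i, ∑ k, ψ i k j)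
    (ψpw : Matrix (Fin (n+1)) (Fin (m+1)) ℝ) (hψpw : ∀ i j, ψpw i j = ∑ k, ψ i k j)
    (y : Fin (n+1) → Fin l → ℝ)
    (μy : ℝ) (hμy : μy = ∑ i, ∑ k, ∑ j, ψ i k j * y i k)
    (vp : Fin (n+1) → ℝ) (hvp : ∀ i, vp i = ∑ k, ∑ j, ψ i k j * y i k)
    (vw : Fin (m+1) → ℝ) (hvw : ∀ j, vw j = ∑ i, ∑ k, ψ i k j * y i k)
    (cp : Fin (n+1) → ℝ) (hcp : ∀ i, cp i = μy * ψp i - vp i)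
    (cw : Fin (m+1) → ℝ) (hcw : ∀ j, cw j = μy * ψw j - vw j)
    (M : Matrix (Fin (n+1) ⊕ Fin (m+1)) (Fin (n+1) ⊕ Fin (m+1)) ℝ)
    (hMpp : ∀ i i', M (Sum.inl i) (Sum.inl i') = (if i = i' then ψp i else 0) - ψp i * ψp i')
    (hMww : ∀ j j', M (Sum.inr j) (Sum.inr j') = (if j = j' then ψw j else 0) - ψw j * ψw j')
    (hMpw : ∀ i j, M (Sum.inl i) (Sum.inr j) = ψpw i j - ψp i * ψw j)
    (hMwp : ∀ i j, M (Sum.inr j) (Sum.inl i) = ψpw i j - ψp i * ψw j)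
    (φ : Fin (n+1) → Fin (m+1) → ℝ)
    (hφ1 : ∑ i, ∑ j, φ i j = 1)
    (φp : Fin (n+1) → ℝ) (hφp : ∀ i, φp i = ∑ j, φ i j)
    (φw : Fin (m+1) → ℝ) (hφw : ∀ j, φw j = ∑ i, φ i j)
    (B : Matrix (Fin (n+1) ⊕ Fin (m+1)) (Fin 2) ℝ)
    (hBp0 : ∀ i, B (Sum.inl i) 0 = φp i) (hBp1 : ∀ i, B (Sum.inl i) 1 = 0)
    (hBw0 : ∀ j, B (Sum.inr j) 0 = 0) (hBw1 : ∀ j, B (Sum.inr j) 1 = φw j)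
    (Mhat : Matrix (Fin n ⊕ Fin m) (Fin (n+1) ⊕ Fin (m+1)) ℝ)
    (hMhatp : ∀ (i : Fin n) t, Mhat (Sum.inl i) t = M (Sum.inl i.castSucc) t)
    (hMhatw : ∀ (j : Fin m) t, Mhat (Sum.inr j) t = M (Sum.inr j.castSucc) t)
    (chat : Fin n ⊕ Fin m → ℝ)
    (hchatp : ∀ i : Fin n, chat (Sum.inl i) = cp i.castSucc)
    (hchatw : ∀ j : Fin m, chat (Sum.inr j) = cw j.castSucc)
    (dhat : Fin n ⊕ Fin m → ℝ)
    (hdhatp : ∀ i : Fin n, dhat (Sum.inl i) = ψp i.castSucc)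
    (hdhatw : ∀ j : Fin m, dhat (Sum.inr j) = ψw j.castSucc)
    (bhat : Fin n ⊕ Fin m → ℝ)
    (hbhatp : ∀ i : Fin n, bhat (Sum.inl i) = φp i.castSucc)
    (hbhatw : ∀ j : Fin m, bhat (Sum.inr j) = φw j.castSucc)
    (K : Matrix ((Fin n ⊕ Fin m) ⊕ Fin 2) (Fin (n+1) ⊕ Fin (m+1)) ℝ)
    (hKM : ∀ s t, K (Sum.inl s) t = Mhat s t)
    (hKB : ∀ (u : Fin 2) t, K (Sum.inr u) t = B t u)
    (K' : Matrix (Fin (n+1) ⊕ Fin (m+1)) ((Fin n ⊕ Fin m) ⊕ Fin 2) ℝ)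
    (hKK' : K * K' = 1) (hK'K : K' * K = 1)
    (a : ℝ) (ha : 0 < a)
    (F : (Fin (n+1) → ℝ) → (Fin (m+1) → ℝ) → ℝ)
    (hF : ∀ (xP : Fin (n+1) → ℝ) (xW : Fin (m+1) → ℝ), F xP xW =
      (∑ i, ∑ k, ∑ j, ψ i k j * (y i k + xP i + xW j)) -
      a * (∑ i, ∑ k, ∑ j, ψ i k j *
        (y i k + xP i + xW j - ∑ i', ∑ k', ∑ j', ψ i' k' j' * (y i' k' + xP i' + xW j'))^2))
    (xa : Fin (n+1) ⊕ Fin (m+1) → ℝ)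
    (hxa : xa = K'.mulVec
      (Sum.elim (fun s => chat s + (1/(2*a)) * (dhat s - bhat s)) (fun _ => 0)))
    (xaP : Fin (n+1) → ℝ) (hxaP : ∀ i, xaP i = xa (Sum.inl i))
    (xaW : Fin (m+1) → ℝ) (hxaW : ∀ j, xaW j = xa (Sum.inr j)) :
    ((∑ i, φp i * xaP i) = 0 ∧ (∑ j, φw j * xaW j) = 0) ∧
    (∀ (xP : Fin (n+1) → ℝ) (xW : Fin (m+1) → ℝ),
      (∑ i, φp i * xP i) = 0 → (∑ j, φw j * xW j) = 0 → F xP xW ≤ F xaP xaW) ∧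
    (∀ (xP : Fin (n+1) → ℝ) (xW : Fin (m+1) → ℝ),
      (∑ i, φp i * xP i) = 0 → (∑ j, φw j * xW j) = 0 →
      (∀ (xP' : Fin (n+1) → ℝ) (xW' : Fin (m+1) → ℝ),
        (∑ i, φp i * xP' i) = 0 → (∑ j, φw j * xW' j) = 0 → F xP' xW' ≤ F xP xW) →
      xP = xaP ∧ xW = xaW) := by
  obtain rfl : ψp = marginalP ψ := funext hψp
  obtain rfl : ψw = marginalW ψ := funext hψw
  obtain rfl : M = indicatorCovMatrix ψ := by
    ext (i | j) (i' | j') <;>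
    simp [indicatorCovMatrix, marginalPW, diagonal_apply, vecMulVec_apply, hMpp, hMww, hMpw, hMwp,
      hψpw, mul_comm]
  obtain rfl : xa = Sum.elim xaP xaW := by ext (i | j) <;> simp [hxaP, hxaW]
  have hK := mulVec_eq_sumElim_dropLast hMhatp hMhatw hKM hKB hBp0 hBp1 hBw0 hBw1
  have hsys : K *ᵥ Sum.elim xaP xaW =
      Sum.elim (fun s => chat s + 1 / (2 * a) * (dhat s - bhat s)) (fun _ => 0) := by
    rw [hxa, mulVec_mulVec, hKK', one_mulVec]
  rw [hK, Sum.elim_eq_iff] at hsys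
  have hfeas : φp ⬝ᵥ xaP = 0 ∧ φw ⬝ᵥ xaW = 0 :=
    ⟨by simpa using congrFun hsys.2 0, by simpa using congrFun hsys.2 1⟩
  have hstat : indicatorCov ψ (hedged y (Sum.elim xaP xaW)) =
      (2 * a)⁻¹ • (marginal ψ - Sum.elim φp φw) := by
    refine indicatorCov_hedged_eq_of_dropLast hψ1 (by simpa [hφp] using hφ1)
      (by simpa [hφw, sum_comm (f := φ)] using hφ1) ?_
    ext s
    have hs := congrFun hsys.1 s
    rcases s with i | j <;>
    simpa [dropLast, indicatorCov_profit, marginal, hchatp, hchatw, hdhatp, hdhatw, hbhatp, hbhatw,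
      hcp, hcw, hvp, hvw, hμy, mean, profit] using hs
  have hFmv : ∀ xP xW, F xP xW = meanVariance ψ a (hedged y (Sum.elim xP xW)) := hF
  refine ⟨hfeas, fun xP xW hP hW => ?_, fun xP xW hP hW hmax => ?_⟩
  all_goals
    change φp ⬝ᵥ xP = 0 at hP
    change φw ⬝ᵥ xW = 0 at hW
    have hb : Sum.elim φp φw ⬝ᵥ Sum.elim xP xW = Sum.elim φp φw ⬝ᵥ Sum.elim xaP xaW := by
      rw [sumElim_dotProduct_sumElim, sumElim_dotProduct_sumElim, hP, hW, hfeas.1, hfeas.2]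
  · rw [hFmv, hFmv]
    exact meanVariance_hedged_le hψ1 hstat hψ0 ha hb
  · have hMx := indicatorCovMatrix_mulVec_eq hψ1 hstat hψ0 ha hb
      (by simpa only [hFmv] using hmax _ _ hfeas.1 hfeas.2)
    have hKx : K *ᵥ Sum.elim xP xW = K *ᵥ Sum.elim xaP xaW := by
      rw [hK, hK, hMx]
      simp [hP, hW, hfeas]
    simpa [mulVec_mulVec, hK'K, Sum.elim_eq_iff] using congrArg (K' *ᵥ ·) hKx

theorem stmt_13 (n m l : ℕ) (hl : 1 ≤ l)
    (p : Fin (n+1) → ℝ) (q : Fin l → ℝ) (w : Fin (m+1) → ℝ)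
    (ψ : Fin (n+1) → Fin l → Fin (m+1) → ℝ)
    (hψ0 : ∀ i k j, 0 ≤ ψ i k j)
    (hψ1 : ∑ i, ∑ k, ∑ j, ψ i k j = 1)
    (ψp : Fin (n+1) → ℝ) (hψp : ∀ i, ψp i = ∑ k, ∑ j, ψ i k j)
    (ψw : Fin (m+1) → ℝ) (hψw : ∀ j, ψw j = ∑ i, ∑ k, ψ i k j)
    (ψpw : Matrix (Fin (n+1)) (Fin (m+1)) ℝ) (hψpw : ∀ i j, ψpw i j = ∑ k, ψ i k j)
    (r : ℝ) (y : Fin (n+1) → Fin l → ℝ) (hy : ∀ i k, y i k = (r - p i) * q k)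
    (μy : ℝ) (hμy : μy = ∑ i, ∑ k, ∑ j, ψ i k j * y i k)
    (σy2 : ℝ) (hσy2 : σy2 = ∑ i, ∑ k, ∑ j, ψ i k j * (y i k - μy)^2)
    (vp : Fin (n+1) → ℝ) (hvp : ∀ i, vp i = ∑ k, ∑ j, ψ i k j * y i k)
    (vw : Fin (m+1) → ℝ) (hvw : ∀ j, vw j = ∑ i, ∑ k, ψ i k j * y i k)
    (cp : Fin (n+1) → ℝ) (hcp : ∀ i, cp i = μy * ψp i - vp i)
    (cw : Fin (m+1) → ℝ) (hcw : ∀ j, cw j = μy * ψw j - vw j)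
    (M : Matrix (Fin (n+1) ⊕ Fin (m+1)) (Fin (n+1) ⊕ Fin (m+1)) ℝ)
    (hMpp : ∀ i i', M (Sum.inl i) (Sum.inl i') = (if i = i' then ψp i else 0) - ψp i * ψp i')
    (hMww : ∀ j j', M (Sum.inr j) (Sum.inr j') = (if j = j' then ψw j else 0) - ψw j * ψw j')
    (hMpw : ∀ i j, M (Sum.inl i) (Sum.inr j) = ψpw i j - ψp i * ψw j)
    (hMwp : ∀ i j, M (Sum.inr j) (Sum.inl i) = ψpw i j - ψp i * ψw j)
    (φ : Fin (n+1) → Fin (m+1) → ℝ)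
    (hφ0 : ∀ i j, 0 ≤ φ i j) (hφ1 : ∑ i, ∑ j, φ i j = 1)
    (φp : Fin (n+1) → ℝ) (hφp : ∀ i, φp i = ∑ j, φ i j)
    (φw : Fin (m+1) → ℝ) (hφw : ∀ j, φw j = ∑ i, φ i j)
    (B : Matrix (Fin (n+1) ⊕ Fin (m+1)) (Fin 2) ℝ)
    (hBp0 : ∀ i, B (Sum.inl i) 0 = φp i) (hBp1 : ∀ i, B (Sum.inl i) 1 = 0)
    (hBw0 : ∀ j, B (Sum.inr j) 0 = 0) (hBw1 : ∀ j, B (Sum.inr j) 1 = φw j)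
    (Mhat : Matrix (Fin n ⊕ Fin m) (Fin (n+1) ⊕ Fin (m+1)) ℝ)
    (hMhatp : ∀ (i : Fin n) t, Mhat (Sum.inl i) t = M (Sum.inl i.castSucc) t)
    (hMhatw : ∀ (j : Fin m) t, Mhat (Sum.inr j) t = M (Sum.inr j.castSucc) t)
    (chat : Fin n ⊕ Fin m → ℝ)
    (hchatp : ∀ i : Fin n, chat (Sum.inl i) = cp i.castSucc)
    (hchatw : ∀ j : Fin m, chat (Sum.inr j) = cw j.castSucc)
    (dhat : Fin n ⊕ Fin m → ℝ)
    (hdhatp : ∀ i : Fin n, dhat (Sum.inl i) = ψp i.castSucc)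
    (hdhatw : ∀ j : Fin m, dhat (Sum.inr j) = ψw j.castSucc)
    (bhat : Fin n ⊕ Fin m → ℝ)
    (hbhatp : ∀ i : Fin n, bhat (Sum.inl i) = φp i.castSucc)
    (hbhatw : ∀ j : Fin m, bhat (Sum.inr j) = φw j.castSucc)
    (K : Matrix ((Fin n ⊕ Fin m) ⊕ Fin 2) (Fin (n+1) ⊕ Fin (m+1)) ℝ)
    (hKM : ∀ s t, K (Sum.inl s) t = Mhat s t)
    (hKB : ∀ (u : Fin 2) t, K (Sum.inr u) t = B t u)
    (K' : Matrix (Fin (n+1) ⊕ Fin (m+1)) ((Fin n ⊕ Fin m) ⊕ Fin 2) ℝ)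
    (hKK' : K * K' = 1) (hK'K : K' * K = 1)
    (a : ℝ) (ha : 0 < a)
    (F : (Fin (n+1) → ℝ) → (Fin (m+1) → ℝ) → ℝ)
    (hF : ∀ (xP : Fin (n+1) → ℝ) (xW : Fin (m+1) → ℝ), F xP xW =
      (∑ i, ∑ k, ∑ j, ψ i k j * (y i k + xP i + xW j)) -
      a * (∑ i, ∑ k, ∑ j, ψ i k j *
        (y i k + xP i + xW j - ∑ i', ∑ k', ∑ j', ψ i' k' j' * (y i' k' + xP i' + xW j'))^2))
    (xa : Fin (n+1) ⊕ Fin (m+1) → ℝ)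
    (hxa : xa = K'.mulVec
      (Sum.elim (fun s => chat s + (1/(2*a)) * (dhat s - bhat s)) (fun _ => 0)))
    (xaP : Fin (n+1) → ℝ) (hxaP : ∀ i, xaP i = xa (Sum.inl i))
    (xaW : Fin (m+1) → ℝ) (hxaW : ∀ j, xaW j = xa (Sum.inr j)) :
    ((∑ i, φp i * xaP i) = 0 ∧ (∑ j, φw j * xaW j) = 0) ∧
    (∀ (xP : Fin (n+1) → ℝ) (xW : Fin (m+1) → ℝ),
      (∑ i, φp i * xP i) = 0 → (∑ j, φw j * xW j) = 0 → F xP xW ≤ F xaP xaW) ∧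
    (∀ (xP : Fin (n+1) → ℝ) (xW : Fin (m+1) → ℝ),
      (∑ i, φp i * xP i) = 0 → (∑ j, φw j * xW j) = 0 →
      (∀ (xP' : Fin (n+1) → ℝ) (xW' : Fin (m+1) → ℝ),
        (∑ i, φp i * xP' i) = 0 → (∑ j, φw j * xW' j) = 0 → F xP' xW' ≤ F xP xW) →
      xP = xaP ∧ xW = xaW) :=
  stmt_13_general n m l ψ hψ0 hψ1 ψp hψp ψw hψw ψpw hψpw y μy hμy vp hvp vw hvw cp hcp cw hcw M hMpp
    hMww hMpw hMwp φ hφ1 φp hφp φw hφw B hBp0 hBp1 hBw0 hBw1 Mhat hMhatp hMhatw chat hchatp hchatw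
    dhat hdhatp hdhatw bhat hbhatp hbhatw K hKM hKB K' hKK' hK'K a ha F hF xa hxa xaP hxaP xaW hxaW
end

section
/- Assume K (the matrix obtained by stacking M̂ on top of B^T) is invertible and that the risk-neutral marginals agree with the real-world marginals: φ_p = ψ_p and φ_w = ψ_w. Then the unique optimal solution of the hedging problem is the same for all a > 0; namely, for every a > 0 the optimal solution equals x^∞ = K^{-1} · (ĉ, 0, 0). -/
/-!
Since the pricing marginals equal the real-world ones, a feasible hedge `x = (x_P, x_W)` has
`ψ`-mean zero. Hence `E[Y] = μ_y` and `Var[Y] = σ_y² - 2 c ⬝ x + xᵀ M x`, where `M` is the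
covariance matrix of the indicator vector of `(p, w)` under the joint law of price and weather.
The rows of `K x^∞ = (ĉ, 0, 0)` say that `x^∞` is feasible and that `M̂ x^∞ = ĉ`; the two deleted
rows are recovered because both `M x^∞` and `c` have zero sum over each block. Completing the
square with `c = M x^∞` gives `F_a(x) = F_a(x^∞) - a (x - x^∞)ᵀ M (x - x^∞)` on feasible hedges, and
`M` is positive semidefinite. So `x^∞` is optimal for every `a > 0`, and an optimal `x` satisfies
`M (x - x^∞) = 0`; together with feasibility this is `K (x - x^∞) = 0`, whence `x = x^∞`.
-/

open Finset Matrix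

theorem Fin.eq_of_sum_eq_of_castSucc {M : Type*} [AddCommGroup M] {n : ℕ} {f g : Fin (n + 1) → M}
    (hsum : ∑ i, f i = ∑ i, g i) (h : ∀ i : Fin n, f i.castSucc = g i.castSucc) : f = g := by
  have hlast : f (Fin.last n) = g (Fin.last n) := by
    simpa [Fin.sum_univ_castSucc, h] using hsum
  funext i
  induction i using Fin.lastCases with
  | last => exact hlast
  | cast i => exact h i

theorem Matrix.IsSymm.sub_dotProduct_mulVec_sub {ι : Type*} [Fintype ι] {M : Matrix ι ι ℝ}
    (hM : M.IsSymm) (x x₀ : ι → ℝ) :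
    (x - x₀) ⬝ᵥ M *ᵥ (x - x₀) = x ⬝ᵥ M *ᵥ x - 2 * ((M *ᵥ x₀) ⬝ᵥ x) + x₀ ⬝ᵥ M *ᵥ x₀ := by
  have hswap : x₀ ⬝ᵥ M *ᵥ x = (M *ᵥ x₀) ⬝ᵥ x := by
    rw [dotProduct_mulVec, ← mulVec_transpose, hM.eq, dotProduct_comm]
  simp only [mulVec_sub, sub_dotProduct, dotProduct_sub, hswap, dotProduct_comm x (M *ᵥ x₀)]
  ring

theorem Matrix.PosSemidef.isMaxOn_and_mulVec_eq_zero {ι : Type*} [Fintype ι]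
    {M : Matrix ι ι ℝ} (hM : M.PosSemidef) {S : Set (ι → ℝ)} {f : (ι → ℝ) → ℝ} {x₀ : ι → ℝ}
    {a C : ℝ} (ha : 0 < a) (hf : ∀ x ∈ S, f x = C - a * ((x - x₀) ⬝ᵥ M *ᵥ (x - x₀)))
    (hx₀ : x₀ ∈ S) : IsMaxOn f S x₀ ∧ ∀ x ∈ S, f x₀ ≤ f x → M *ᵥ (x - x₀) = 0 := by
  have hnonneg (x : ι → ℝ) : 0 ≤ (x - x₀) ⬝ᵥ M *ᵥ (x - x₀) := by
    simpa using hM.dotProduct_mulVec_nonneg (x - x₀)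
  have hfx₀ : f x₀ = C := by simp [hf x₀ hx₀]
  refine ⟨isMaxOn_iff.mpr fun x hx => ?_, fun x hx hle => ?_⟩
  · rw [hf x hx, hfx₀]
    nlinarith [hnonneg x]
  · rw [hf x hx, hfx₀] at hle
    have hzero : (x - x₀) ⬝ᵥ M *ᵥ (x - x₀) = 0 := by nlinarith [hnonneg x]
    exact (hM.dotProduct_mulVec_zero_iff _).mp (by simpa using hzero)

section Covariance

variable {α β : Type*}

def hedgePayoff (x : α ⊕ β → ℝ) (i : α) (j : β) : ℝ := x (.inl i) + x (.inr j)

@[simp]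
theorem hedgePayoff_sum_elim (xP : α → ℝ) (xW : β → ℝ) (i : α) (j : β) :
    hedgePayoff (Sum.elim xP xW) i j = xP i + xW j := rfl

variable [Fintype α] [Fintype β]

def marginalVec (π : Matrix α β ℝ) : α ⊕ β → ℝ :=
  Sum.elim (fun i => ∑ j, π i j) (fun j => ∑ i, π i j)

/-- The covariance matrix of the indicator vector `(𝟙[p = pᵢ])ᵢ, (𝟙[w = wⱼ])ⱼ` when `(p, w)` has
joint law `π`. -/
def covMatrix [DecidableEq α] [DecidableEq β] (π : Matrix α β ℝ) : Matrix (α ⊕ β) (α ⊕ β) ℝ :=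
  fromBlocks (diagonal fun i => ∑ j, π i j) π πᵀ (diagonal fun j => ∑ i, π i j)
    - vecMulVec (marginalVec π) (marginalVec π)

variable (π : Matrix α β ℝ)

theorem marginalVec_dotProduct (u : α ⊕ β → ℝ) :
    marginalVec π ⬝ᵥ u = ∑ i, ∑ j, π i j * hedgePayoff u i j := by
  simp only [marginalVec, hedgePayoff, dotProduct, Fintype.sum_sum_type, Sum.elim_inl,
    Sum.elim_inr, mul_add, Finset.sum_add_distrib, Finset.sum_mul]
  rw [Finset.sum_comm (f := fun j i => π i j * u (.inr j))]

theorem dotProduct_covMatrix_mulVec [DecidableEq α] [DecidableEq β] (u v : α ⊕ β → ℝ) :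
    u ⬝ᵥ covMatrix π *ᵥ v = ∑ i, ∑ j, π i j * (hedgePayoff u i j * hedgePayoff v i j)
      - (marginalVec π ⬝ᵥ u) * (marginalVec π ⬝ᵥ v) := by
  have hsecond : u ⬝ᵥ fromBlocks (diagonal fun i => ∑ j, π i j) π πᵀ (diagonal fun j => ∑ i, π i j) *ᵥ v
      = ∑ i, ∑ j, π i j * (hedgePayoff u i j * hedgePayoff v i j) := by
    simp only [dotProduct, mulVec, Fintype.sum_sum_type, fromBlocks_apply₁₁, fromBlocks_apply₁₂,
      fromBlocks_apply₂₁, fromBlocks_apply₂₂, diagonal_apply, ite_mul, zero_mul, Finset.sum_ite_eq,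
      Finset.mem_univ, if_true, transpose_apply, hedgePayoff, Finset.sum_mul, Finset.mul_sum,
      ← Finset.sum_add_distrib]
    rw [Finset.sum_comm (f := fun j i => u (.inr j) * _), ← Finset.sum_add_distrib]
    refine Finset.sum_congr rfl fun i _ => ?_
    rw [← Finset.sum_add_distrib]
    exact Finset.sum_congr rfl fun j _ => by ring
  rw [covMatrix, sub_mulVec, dotProduct_sub, hsecond, vecMulVec_mulVec]
  rw [op_smul_eq_smul, dotProduct_smul, smul_eq_mul, dotProduct_comm u, mul_comm]

theorem isSymm_covMatrix [DecidableEq α] [DecidableEq β] : (covMatrix π).IsSymm :=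
  ((isSymm_diagonal _).fromBlocks rfl (isSymm_diagonal _)).sub (transpose_vecMulVec _ _)

theorem posSemidef_covMatrix [DecidableEq α] [DecidableEq β] (h0 : ∀ i j, 0 ≤ π i j)
    (h1 : ∑ i, ∑ j, π i j = 1) : (covMatrix π).PosSemidef := by
  refine .of_dotProduct_mulVec_nonneg (isHermitian_iff_isSymm.mpr (isSymm_covMatrix π)) fun u => ?_
  rw [star_trivial, dotProduct_covMatrix_mulVec, marginalVec_dotProduct]
  have hCS := Finset.sum_sq_le_sum_mul_sum_of_sq_le_mul (univ : Finset (α × β))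
    (r := fun p => π p.1 p.2 * hedgePayoff u p.1 p.2) (f := fun p => π p.1 p.2)
    (g := fun p => π p.1 p.2 * (hedgePayoff u p.1 p.2 * hedgePayoff u p.1 p.2))
    (fun p _ => h0 p.1 p.2) (fun p _ => mul_nonneg (h0 p.1 p.2) (mul_self_nonneg _))
    (fun p _ => le_of_eq (by ring))
  simp only [Fintype.sum_prod_type, h1, one_mul, sq] at hCS
  linarith

theorem sum_covMatrix_mulVec_inl [DecidableEq α] [DecidableEq β] (h1 : ∑ i, ∑ j, π i j = 1)
    (v : α ⊕ β → ℝ) : ∑ i, (covMatrix π *ᵥ v) (.inl i) = 0 := by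
  have h := dotProduct_covMatrix_mulVec π (Sum.elim 1 0) v
  rw [marginalVec_dotProduct, marginalVec_dotProduct] at h
  simpa [dotProduct, hedgePayoff, Fintype.sum_sum_type, h1] using h

theorem sum_covMatrix_mulVec_inr [DecidableEq α] [DecidableEq β] (h1 : ∑ i, ∑ j, π i j = 1)
    (v : α ⊕ β → ℝ) : ∑ j, (covMatrix π *ᵥ v) (.inr j) = 0 := by
  have h := dotProduct_covMatrix_mulVec π (Sum.elim 0 1) v
  rw [marginalVec_dotProduct, marginalVec_dotProduct] at h
  simpa [dotProduct, hedgePayoff, Fintype.sum_sum_type, h1] using h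

theorem eq_covMatrix_of_apply [DecidableEq α] [DecidableEq β] {ψp : α → ℝ} {ψw : β → ℝ}
    {M : Matrix (α ⊕ β) (α ⊕ β) ℝ} (hmarg : marginalVec π = Sum.elim ψp ψw)
    (hMpp : ∀ i i', M (.inl i) (.inl i') = (if i = i' then ψp i else 0) - ψp i * ψp i')
    (hMww : ∀ j j', M (.inr j) (.inr j') = (if j = j' then ψw j else 0) - ψw j * ψw j')
    (hMpw : ∀ i j, M (.inl i) (.inr j) = π i j - ψp i * ψw j)
    (hMwp : ∀ i j, M (.inr j) (.inl i) = π i j - ψp i * ψw j) :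
    M = covMatrix π := by
  have hrow : ∀ i, ∑ j, π i j = ψp i := fun i => congrFun hmarg (.inl i)
  have hcol : ∀ j, ∑ i, π i j = ψw j := fun j => congrFun hmarg (.inr j)
  ext (i | j) (i' | j') <;>
    simp [covMatrix, hmarg, hrow, hcol, hMpp, hMpw, hMwp, hMww, diagonal_apply, vecMulVec_apply,
      mul_comm]

section PriceQuantityWeather

variable {κ : Type*} [Fintype κ] {ψ : α → κ → β → ℝ}

theorem sum_sum_sum_comm_right {γ : Type*} [AddCommMonoid γ] (f : α → κ → β → γ) :
    ∑ i, ∑ k, ∑ j, f i k j = ∑ j, ∑ i, ∑ k, f i k j :=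
  (Finset.sum_congr rfl fun _ _ => Finset.sum_comm).trans Finset.sum_comm

theorem sum_sum_sum_mul_eq_of_marginal {g : α → β → ℝ} (hπ : ∀ i j, π i j = ∑ k, ψ i k j) :
    ∑ i, ∑ k, ∑ j, ψ i k j * g i j = ∑ i, ∑ j, π i j * g i j := by
  refine Finset.sum_congr rfl fun i _ => ?_
  simp only [hπ, Finset.sum_mul]
  exact Finset.sum_comm

theorem marginalVec_eq {ψp : α → ℝ} {ψw : β → ℝ} (hπ : ∀ i j, π i j = ∑ k, ψ i k j)
    (hψp : ∀ i, ψp i = ∑ k, ∑ j, ψ i k j) (hψw : ∀ j, ψw j = ∑ i, ∑ k, ψ i k j) :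
    marginalVec π = Sum.elim ψp ψw := by
  ext (i | j)
  · simp only [marginalVec, Sum.elim_inl, hψp, hπ]
    exact Finset.sum_comm
  · simp only [marginalVec, Sum.elim_inr, hψw, hπ]

theorem meanVariance_add_of_centered {y : α → κ → ℝ} {μy σy2 : ℝ} {xP : α → ℝ} {xW : β → ℝ}
    (hμy : μy = ∑ i, ∑ k, ∑ j, ψ i k j * y i k)
    (hσy2 : σy2 = ∑ i, ∑ k, ∑ j, ψ i k j * (y i k - μy) ^ 2)
    (hcentered : ∑ i, ∑ k, ∑ j, ψ i k j * (xP i + xW j) = 0) (a : ℝ) :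
    (∑ i, ∑ k, ∑ j, ψ i k j * (y i k + xP i + xW j)) -
      a * (∑ i, ∑ k, ∑ j, ψ i k j *
        (y i k + xP i + xW j - ∑ i', ∑ k', ∑ j', ψ i' k' j' * (y i' k' + xP i' + xW j')) ^ 2)
      = μy - a * (σy2 + 2 * ∑ i, ∑ k, ∑ j, ψ i k j * (y i k * (xP i + xW j))
        + ∑ i, ∑ k, ∑ j, ψ i k j * (xP i + xW j) ^ 2) := by
  have hmean : ∑ i, ∑ k, ∑ j, ψ i k j * (y i k + xP i + xW j) = μy := by
    have hsplit : ∀ i k j, ψ i k j * (y i k + xP i + xW j)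
        = ψ i k j * y i k + ψ i k j * (xP i + xW j) := fun i k j => by ring
    simp only [hsplit, Finset.sum_add_distrib, hcentered, hμy, add_zero]
  have hexpand : ∀ i k j, ψ i k j * (y i k + xP i + xW j - μy) ^ 2
      = ψ i k j * (y i k - μy) ^ 2 + 2 * (ψ i k j * (y i k * (xP i + xW j)))
        - 2 * μy * (ψ i k j * (xP i + xW j)) + ψ i k j * (xP i + xW j) ^ 2 := fun i k j => by
    ring
  simp only [hmean, hexpand, Finset.sum_add_distrib, Finset.sum_sub_distrib, ← Finset.mul_sum,
    hcentered, ← hσy2]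
  ring

theorem objective_eq_of_centered [DecidableEq α] [DecidableEq β] {y : α → κ → ℝ}
    {μy σy2 : ℝ} {ψp vp cp xP : α → ℝ} {ψw vw cw xW : β → ℝ}
    (hπ : ∀ i j, π i j = ∑ k, ψ i k j)
    (hψp : ∀ i, ψp i = ∑ k, ∑ j, ψ i k j) (hψw : ∀ j, ψw j = ∑ i, ∑ k, ψ i k j)
    (hμy : μy = ∑ i, ∑ k, ∑ j, ψ i k j * y i k)
    (hσy2 : σy2 = ∑ i, ∑ k, ∑ j, ψ i k j * (y i k - μy) ^ 2)
    (hvp : ∀ i, vp i = ∑ k, ∑ j, ψ i k j * y i k) (hvw : ∀ j, vw j = ∑ i, ∑ k, ψ i k j * y i k)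
    (hcp : ∀ i, cp i = μy * ψp i - vp i) (hcw : ∀ j, cw j = μy * ψw j - vw j)
    (hP : ψp ⬝ᵥ xP = 0) (hW : ψw ⬝ᵥ xW = 0) (a : ℝ) :
    (∑ i, ∑ k, ∑ j, ψ i k j * (y i k + xP i + xW j)) -
      a * (∑ i, ∑ k, ∑ j, ψ i k j *
        (y i k + xP i + xW j - ∑ i', ∑ k', ∑ j', ψ i' k' j' * (y i' k' + xP i' + xW j')) ^ 2)
      = μy - a * σy2 + a * (2 * (Sum.elim cp cw ⬝ᵥ Sum.elim xP xW)
        - Sum.elim xP xW ⬝ᵥ covMatrix π *ᵥ Sum.elim xP xW) := by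
  have hmarg : marginalVec π ⬝ᵥ Sum.elim xP xW = 0 := by
    rw [marginalVec_eq π hπ hψp hψw, sumElim_dotProduct_sumElim, hP, hW, add_zero]
  have hcentered : ∑ i, ∑ k, ∑ j, ψ i k j * (xP i + xW j) = 0 := by
    rw [sum_sum_sum_mul_eq_of_marginal π hπ (g := fun i j => xP i + xW j), ← hmarg,
      marginalVec_dotProduct]
    rfl
  have hsq : ∑ i, ∑ k, ∑ j, ψ i k j * (xP i + xW j) ^ 2
      = Sum.elim xP xW ⬝ᵥ covMatrix π *ᵥ Sum.elim xP xW := by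
    rw [dotProduct_covMatrix_mulVec, hmarg, mul_zero, sub_zero,
      ← sum_sum_sum_mul_eq_of_marginal π hπ]
    simp [sq]
  have hcov : ∑ i, ∑ k, ∑ j, ψ i k j * (y i k * (xP i + xW j))
      = -(Sum.elim cp cw ⬝ᵥ Sum.elim xP xW) := by
    have hc : Sum.elim cp cw = μy • Sum.elim ψp ψw - Sum.elim vp vw := by
      ext (i | j) <;> simp [hcp, hcw]
    have hvP : ∑ i, ∑ k, ∑ j, ψ i k j * y i k * xP i = vp ⬝ᵥ xP := by
      simp only [dotProduct, hvp, Finset.sum_mul]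
    have hvW : ∑ i, ∑ k, ∑ j, ψ i k j * y i k * xW j = vw ⬝ᵥ xW := by
      simp only [dotProduct, hvw, Finset.sum_mul]
      exact sum_sum_sum_comm_right _
    simp only [hc, sub_dotProduct, smul_dotProduct, sumElim_dotProduct_sumElim, hP, hW, ← hvP,
      ← hvW, mul_add, ← mul_assoc, Finset.sum_add_distrib]
    simp
  rw [meanVariance_add_of_centered hμy hσy2 hcentered, hcov, hsq]
  ring

end PriceQuantityWeather

end Covariance

theorem covMatrix_mulVec_eq_of_castSucc {n m : ℕ} {π : Matrix (Fin (n + 1)) (Fin (m + 1)) ℝ}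
    (h1 : ∑ i, ∑ j, π i j = 1) {x : Fin (n + 1) ⊕ Fin (m + 1) → ℝ} {cp : Fin (n + 1) → ℝ}
    {cw : Fin (m + 1) → ℝ} (hcp : ∑ i, cp i = 0) (hcw : ∑ j, cw j = 0)
    (hP : ∀ i : Fin n, (covMatrix π *ᵥ x) (.inl i.castSucc) = cp i.castSucc)
    (hW : ∀ j : Fin m, (covMatrix π *ᵥ x) (.inr j.castSucc) = cw j.castSucc) :
    covMatrix π *ᵥ x = Sum.elim cp cw := by
  have hP' : (fun i => (covMatrix π *ᵥ x) (.inl i)) = cp :=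
    Fin.eq_of_sum_eq_of_castSucc (by rw [sum_covMatrix_mulVec_inl π h1, hcp]) hP
  have hW' : (fun j => (covMatrix π *ᵥ x) (.inr j)) = cw :=
    Fin.eq_of_sum_eq_of_castSucc (by rw [sum_covMatrix_mulVec_inr π h1, hcw]) hW
  ext (i | j)
  · exact congrFun hP' i
  · exact congrFun hW' j

theorem stacked_mulVec {n m : ℕ}
    {M : Matrix (Fin (n + 1) ⊕ Fin (m + 1)) (Fin (n + 1) ⊕ Fin (m + 1)) ℝ}
    {B : Matrix (Fin (n + 1) ⊕ Fin (m + 1)) (Fin 2) ℝ}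
    {Mhat : Matrix (Fin n ⊕ Fin m) (Fin (n + 1) ⊕ Fin (m + 1)) ℝ}
    {K : Matrix ((Fin n ⊕ Fin m) ⊕ Fin 2) (Fin (n + 1) ⊕ Fin (m + 1)) ℝ}
    {ψp : Fin (n + 1) → ℝ} {ψw : Fin (m + 1) → ℝ}
    (hMhatp : ∀ (i : Fin n) t, Mhat (.inl i) t = M (.inl i.castSucc) t)
    (hMhatw : ∀ (j : Fin m) t, Mhat (.inr j) t = M (.inr j.castSucc) t)
    (hBp0 : ∀ i, B (.inl i) 0 = ψp i) (hBp1 : ∀ i, B (.inl i) 1 = 0)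
    (hBw0 : ∀ j, B (.inr j) 0 = 0) (hBw1 : ∀ j, B (.inr j) 1 = ψw j)
    (hKM : ∀ s t, K (.inl s) t = Mhat s t) (hKB : ∀ (u : Fin 2) t, K (.inr u) t = B t u)
    (u : Fin (n + 1) ⊕ Fin (m + 1) → ℝ) :
    K *ᵥ u = Sum.elim (Sum.elim (fun i => (M *ᵥ u) (.inl i.castSucc))
      (fun j => (M *ᵥ u) (.inr j.castSucc))) ![ψp ⬝ᵥ (u ∘ .inl), ψw ⬝ᵥ (u ∘ .inr)] := by
  ext ((i | j) | t)
  · simp [mulVec, hKM, hMhatp]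
  · simp [mulVec, hKM, hMhatw]
  · fin_cases t <;> simp [mulVec, dotProduct, Fintype.sum_sum_type, hKB, hBp0, hBp1, hBw0, hBw1]

theorem stmt_15_general (n m l : ℕ)
    (ψ : Fin (n+1) → Fin l → Fin (m+1) → ℝ)
    (hψ0 : ∀ i k j, 0 ≤ ψ i k j)
    (hψ1 : ∑ i, ∑ k, ∑ j, ψ i k j = 1)
    (ψp : Fin (n+1) → ℝ) (hψp : ∀ i, ψp i = ∑ k, ∑ j, ψ i k j)
    (ψw : Fin (m+1) → ℝ) (hψw : ∀ j, ψw j = ∑ i, ∑ k, ψ i k j)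
    (ψpw : Matrix (Fin (n+1)) (Fin (m+1)) ℝ) (hψpw : ∀ i j, ψpw i j = ∑ k, ψ i k j)
    (y : Fin (n+1) → Fin l → ℝ)
    (μy : ℝ) (hμy : μy = ∑ i, ∑ k, ∑ j, ψ i k j * y i k)
    (σy2 : ℝ) (hσy2 : σy2 = ∑ i, ∑ k, ∑ j, ψ i k j * (y i k - μy)^2)
    (vp : Fin (n+1) → ℝ) (hvp : ∀ i, vp i = ∑ k, ∑ j, ψ i k j * y i k)
    (vw : Fin (m+1) → ℝ) (hvw : ∀ j, vw j = ∑ i, ∑ k, ψ i k j * y i k)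
    (cp : Fin (n+1) → ℝ) (hcp : ∀ i, cp i = μy * ψp i - vp i)
    (cw : Fin (m+1) → ℝ) (hcw : ∀ j, cw j = μy * ψw j - vw j)
    (M : Matrix (Fin (n+1) ⊕ Fin (m+1)) (Fin (n+1) ⊕ Fin (m+1)) ℝ)
    (hMpp : ∀ i i', M (Sum.inl i) (Sum.inl i') = (if i = i' then ψp i else 0) - ψp i * ψp i')
    (hMww : ∀ j j', M (Sum.inr j) (Sum.inr j') = (if j = j' then ψw j else 0) - ψw j * ψw j')
    (hMpw : ∀ i j, M (Sum.inl i) (Sum.inr j) = ψpw i j - ψp i * ψw j)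
    (hMwp : ∀ i j, M (Sum.inr j) (Sum.inl i) = ψpw i j - ψp i * ψw j)
    (φp : Fin (n+1) → ℝ)
    (φw : Fin (m+1) → ℝ)
    (B : Matrix (Fin (n+1) ⊕ Fin (m+1)) (Fin 2) ℝ)
    (hBp0 : ∀ i, B (Sum.inl i) 0 = φp i) (hBp1 : ∀ i, B (Sum.inl i) 1 = 0)
    (hBw0 : ∀ j, B (Sum.inr j) 0 = 0) (hBw1 : ∀ j, B (Sum.inr j) 1 = φw j)
    (Mhat : Matrix (Fin n ⊕ Fin m) (Fin (n+1) ⊕ Fin (m+1)) ℝ)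
    (hMhatp : ∀ (i : Fin n) t, Mhat (Sum.inl i) t = M (Sum.inl i.castSucc) t)
    (hMhatw : ∀ (j : Fin m) t, Mhat (Sum.inr j) t = M (Sum.inr j.castSucc) t)
    (chat : Fin n ⊕ Fin m → ℝ)
    (hchatp : ∀ i : Fin n, chat (Sum.inl i) = cp i.castSucc)
    (hchatw : ∀ j : Fin m, chat (Sum.inr j) = cw j.castSucc)
    (K : Matrix ((Fin n ⊕ Fin m) ⊕ Fin 2) (Fin (n+1) ⊕ Fin (m+1)) ℝ)
    (hKM : ∀ s t, K (Sum.inl s) t = Mhat s t)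
    (hKB : ∀ (u : Fin 2) t, K (Sum.inr u) t = B t u)
    (K' : Matrix (Fin (n+1) ⊕ Fin (m+1)) ((Fin n ⊕ Fin m) ⊕ Fin 2) ℝ)
    (hKK' : K * K' = 1) (hK'K : K' * K = 1)
    (F : ℝ → (Fin (n+1) → ℝ) → (Fin (m+1) → ℝ) → ℝ)
    (hF : ∀ (a : ℝ) (xP : Fin (n+1) → ℝ) (xW : Fin (m+1) → ℝ), F a xP xW =
      (∑ i, ∑ k, ∑ j, ψ i k j * (y i k + xP i + xW j)) -
      a * (∑ i, ∑ k, ∑ j, ψ i k j *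
        (y i k + xP i + xW j - ∑ i', ∑ k', ∑ j', ψ i' k' j' * (y i' k' + xP i' + xW j'))^2))
    (hφpψ : φp = ψp) (hφwψ : φw = ψw)
    (xInf : Fin (n+1) ⊕ Fin (m+1) → ℝ)
    (hxInf : xInf = K'.mulVec (Sum.elim chat (fun _ => 0))) :
    ∀ a : ℝ, 0 < a →
      ((∑ i, φp i * xInf (Sum.inl i)) = 0 ∧
       (∑ j, φw j * xInf (Sum.inr j)) = 0 ∧
       (∀ (xP : Fin (n+1) → ℝ) (xW : Fin (m+1) → ℝ),
         (∑ i, φp i * xP i) = 0 → (∑ j, φw j * xW j) = 0 →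
         F a xP xW ≤ F a (fun i => xInf (Sum.inl i)) (fun j => xInf (Sum.inr j)))) ∧
      (∀ (xP : Fin (n+1) → ℝ) (xW : Fin (m+1) → ℝ),
        (∑ i, φp i * xP i) = 0 → (∑ j, φw j * xW j) = 0 →
        (∀ (xP' : Fin (n+1) → ℝ) (xW' : Fin (m+1) → ℝ),
          (∑ i, φp i * xP' i) = 0 → (∑ j, φw j * xW' j) = 0 → F a xP' xW' ≤ F a xP xW) →
        Sum.elim xP xW = xInf) := by
  intro a ha
  subst hφpψ hφwψ
  have hπ0 : ∀ i j, 0 ≤ ψpw i j := fun i j => by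
    rw [hψpw]; exact Finset.sum_nonneg fun k _ => hψ0 i k j
  have hπ1 : ∑ i, ∑ j, ψpw i j = 1 := by
    simpa [hψ1] using (sum_sum_sum_mul_eq_of_marginal ψpw hψpw (g := fun _ _ => 1)).symm
  have hM : M = covMatrix ψpw :=
    eq_covMatrix_of_apply ψpw (marginalVec_eq ψpw hψpw hψp hψw) hMpp hMww hMpw hMwp
  have hK := stacked_mulVec hMhatp hMhatw hBp0 hBp1 hBw0 hBw1 hKM hKB
  have hKx : K *ᵥ xInf = Sum.elim chat 0 := by
    rw [hxInf, mulVec_mulVec, hKK', one_mulVec]; rfl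
  have hfeasP : φp ⬝ᵥ (xInf ∘ .inl) = 0 := by simpa [hK] using congrFun hKx (.inr 0)
  have hfeasW : φw ⬝ᵥ (xInf ∘ .inr) = 0 := by simpa [hK] using congrFun hKx (.inr 1)
  have hsum_cp : ∑ i, cp i = 0 := by
    simp only [hcp, Finset.sum_sub_distrib, ← Finset.mul_sum, hψp, hψ1, hvp, ← hμy]; ring
  have hsum_cw : ∑ j, cw j = 0 := by
    simp only [hcw, Finset.sum_sub_distrib, ← Finset.mul_sum, hψw, hvw, ← sum_sum_sum_comm_right,
      hψ1, ← hμy]; ring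
  have hMx : M *ᵥ xInf = Sum.elim cp cw := by
    rw [hM]
    refine covMatrix_mulVec_eq_of_castSucc hπ1 hsum_cp hsum_cw (fun i => ?_) (fun j => ?_)
    · simpa [hK, hM, hchatp] using congrFun hKx (.inl (.inl i))
    · simpa [hK, hM, hchatw] using congrFun hKx (.inl (.inr j))
  have hMsymm : M.IsSymm := hM ▸ isSymm_covMatrix ψpw
  have hobj : ∀ x ∈ {x | φp ⬝ᵥ (x ∘ .inl) = 0 ∧ φw ⬝ᵥ (x ∘ .inr) = 0},
      F a (x ∘ .inl) (x ∘ .inr) = μy - a * σy2 + a * (xInf ⬝ᵥ M *ᵥ xInf)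
        - a * ((x - xInf) ⬝ᵥ M *ᵥ (x - xInf)) := by
    rintro x ⟨hP, hW⟩
    rw [hF, objective_eq_of_centered ψpw hψpw hψp hψw hμy hσy2 hvp hvw hcp hcw hP hW,
      Sum.elim_comp_inl_inr, ← hM, ← hMx, hMsymm.sub_dotProduct_mulVec_sub]
    ring
  obtain ⟨hmax, huniq⟩ := (hM ▸ posSemidef_covMatrix ψpw hπ0 hπ1).isMaxOn_and_mulVec_eq_zero ha
    hobj ⟨hfeasP, hfeasW⟩
  refine ⟨⟨hfeasP, hfeasW, fun xP xW hP hW => isMaxOn_iff.mp hmax (Sum.elim xP xW) ⟨hP, hW⟩⟩,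
    fun xP xW hP hW hopt => ?_⟩
  have hker := huniq (Sum.elim xP xW) ⟨hP, hW⟩ (hopt _ _ hfeasP hfeasW)
  have hdP : φp ⬝ᵥ ((Sum.elim xP xW - xInf) ∘ .inl) = 0 := by
    rw [Pi.sub_comp, dotProduct_sub, hfeasP, sub_zero]; exact hP
  have hdW : φw ⬝ᵥ ((Sum.elim xP xW - xInf) ∘ .inr) = 0 := by
    rw [Pi.sub_comp, dotProduct_sub, hfeasW, sub_zero]; exact hW
  have hKker : K *ᵥ (Sum.elim xP xW - xInf) = 0 := by
    rw [hK, hker, hdP, hdW]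
    ext ((i | j) | t)
    · rfl
    · rfl
    · fin_cases t <;> rfl
  simpa [mulVec_mulVec, hK'K, sub_eq_zero] using congrArg (K' *ᵥ ·) hKker

theorem stmt_15 (n m l : ℕ) (hl : 1 ≤ l)
    (p : Fin (n+1) → ℝ) (q : Fin l → ℝ) (w : Fin (m+1) → ℝ)
    (ψ : Fin (n+1) → Fin l → Fin (m+1) → ℝ)
    (hψ0 : ∀ i k j, 0 ≤ ψ i k j)
    (hψ1 : ∑ i, ∑ k, ∑ j, ψ i k j = 1)
    (ψp : Fin (n+1) → ℝ) (hψp : ∀ i, ψp i = ∑ k, ∑ j, ψ i k j)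
    (ψw : Fin (m+1) → ℝ) (hψw : ∀ j, ψw j = ∑ i, ∑ k, ψ i k j)
    (ψpw : Matrix (Fin (n+1)) (Fin (m+1)) ℝ) (hψpw : ∀ i j, ψpw i j = ∑ k, ψ i k j)
    (r : ℝ) (y : Fin (n+1) → Fin l → ℝ) (hy : ∀ i k, y i k = (r - p i) * q k)
    (μy : ℝ) (hμy : μy = ∑ i, ∑ k, ∑ j, ψ i k j * y i k)
    (σy2 : ℝ) (hσy2 : σy2 = ∑ i, ∑ k, ∑ j, ψ i k j * (y i k - μy)^2)
    (vp : Fin (n+1) → ℝ) (hvp : ∀ i, vp i = ∑ k, ∑ j, ψ i k j * y i k)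
    (vw : Fin (m+1) → ℝ) (hvw : ∀ j, vw j = ∑ i, ∑ k, ψ i k j * y i k)
    (cp : Fin (n+1) → ℝ) (hcp : ∀ i, cp i = μy * ψp i - vp i)
    (cw : Fin (m+1) → ℝ) (hcw : ∀ j, cw j = μy * ψw j - vw j)
    (M : Matrix (Fin (n+1) ⊕ Fin (m+1)) (Fin (n+1) ⊕ Fin (m+1)) ℝ)
    (hMpp : ∀ i i', M (Sum.inl i) (Sum.inl i') = (if i = i' then ψp i else 0) - ψp i * ψp i')
    (hMww : ∀ j j', M (Sum.inr j) (Sum.inr j') = (if j = j' then ψw j else 0) - ψw j * ψw j')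
    (hMpw : ∀ i j, M (Sum.inl i) (Sum.inr j) = ψpw i j - ψp i * ψw j)
    (hMwp : ∀ i j, M (Sum.inr j) (Sum.inl i) = ψpw i j - ψp i * ψw j)
    (φ : Fin (n+1) → Fin (m+1) → ℝ)
    (hφ0 : ∀ i j, 0 ≤ φ i j) (hφ1 : ∑ i, ∑ j, φ i j = 1)
    (φp : Fin (n+1) → ℝ) (hφp : ∀ i, φp i = ∑ j, φ i j)
    (φw : Fin (m+1) → ℝ) (hφw : ∀ j, φw j = ∑ i, φ i j)
    (B : Matrix (Fin (n+1) ⊕ Fin (m+1)) (Fin 2) ℝ)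
    (hBp0 : ∀ i, B (Sum.inl i) 0 = φp i) (hBp1 : ∀ i, B (Sum.inl i) 1 = 0)
    (hBw0 : ∀ j, B (Sum.inr j) 0 = 0) (hBw1 : ∀ j, B (Sum.inr j) 1 = φw j)
    (Mhat : Matrix (Fin n ⊕ Fin m) (Fin (n+1) ⊕ Fin (m+1)) ℝ)
    (hMhatp : ∀ (i : Fin n) t, Mhat (Sum.inl i) t = M (Sum.inl i.castSucc) t)
    (hMhatw : ∀ (j : Fin m) t, Mhat (Sum.inr j) t = M (Sum.inr j.castSucc) t)
    (chat : Fin n ⊕ Fin m → ℝ)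
    (hchatp : ∀ i : Fin n, chat (Sum.inl i) = cp i.castSucc)
    (hchatw : ∀ j : Fin m, chat (Sum.inr j) = cw j.castSucc)
    (dhat : Fin n ⊕ Fin m → ℝ)
    (hdhatp : ∀ i : Fin n, dhat (Sum.inl i) = ψp i.castSucc)
    (hdhatw : ∀ j : Fin m, dhat (Sum.inr j) = ψw j.castSucc)
    (bhat : Fin n ⊕ Fin m → ℝ)
    (hbhatp : ∀ i : Fin n, bhat (Sum.inl i) = φp i.castSucc)
    (hbhatw : ∀ j : Fin m, bhat (Sum.inr j) = φw j.castSucc)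
    (K : Matrix ((Fin n ⊕ Fin m) ⊕ Fin 2) (Fin (n+1) ⊕ Fin (m+1)) ℝ)
    (hKM : ∀ s t, K (Sum.inl s) t = Mhat s t)
    (hKB : ∀ (u : Fin 2) t, K (Sum.inr u) t = B t u)
    (K' : Matrix (Fin (n+1) ⊕ Fin (m+1)) ((Fin n ⊕ Fin m) ⊕ Fin 2) ℝ)
    (hKK' : K * K' = 1) (hK'K : K' * K = 1)
    (F : ℝ → (Fin (n+1) → ℝ) → (Fin (m+1) → ℝ) → ℝ)
    (hF : ∀ (a : ℝ) (xP : Fin (n+1) → ℝ) (xW : Fin (m+1) → ℝ), F a xP xW =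
      (∑ i, ∑ k, ∑ j, ψ i k j * (y i k + xP i + xW j)) -
      a * (∑ i, ∑ k, ∑ j, ψ i k j *
        (y i k + xP i + xW j - ∑ i', ∑ k', ∑ j', ψ i' k' j' * (y i' k' + xP i' + xW j'))^2))
    (hφpψ : φp = ψp) (hφwψ : φw = ψw)
    (xInf : Fin (n+1) ⊕ Fin (m+1) → ℝ)
    (hxInf : xInf = K'.mulVec (Sum.elim chat (fun _ => 0))) :
    ∀ a : ℝ, 0 < a →
      ((∑ i, φp i * xInf (Sum.inl i)) = 0 ∧
       (∑ j, φw j * xInf (Sum.inr j)) = 0 ∧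
       (∀ (xP : Fin (n+1) → ℝ) (xW : Fin (m+1) → ℝ),
         (∑ i, φp i * xP i) = 0 → (∑ j, φw j * xW j) = 0 →
         F a xP xW ≤ F a (fun i => xInf (Sum.inl i)) (fun j => xInf (Sum.inr j)))) ∧
      (∀ (xP : Fin (n+1) → ℝ) (xW : Fin (m+1) → ℝ),
        (∑ i, φp i * xP i) = 0 → (∑ j, φw j * xW j) = 0 →
        (∀ (xP' : Fin (n+1) → ℝ) (xW' : Fin (m+1) → ℝ),
          (∑ i, φp i * xP' i) = 0 → (∑ j, φw j * xW' j) = 0 → F a xP' xW' ≤ F a xP xW) →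
        Sum.elim xP xW = xInf) :=
  stmt_15_general n m l ψ hψ0 hψ1 ψp hψp ψw hψw ψpw hψpw y μy hμy σy2 hσy2 vp hvp vw hvw cp hcp cw
    hcw M hMpp hMww hMpw hMwp φp φw B hBp0 hBp1 hBw0 hBw1 Mhat hMhatp hMhatw chat hchatp hchatw K
    hKM hKB K' hKK' hK'K F hF hφpψ hφwψ xInf hxInf
end
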